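/- arXiv:2407.06398 — 4 statements merged into one kernel-verified Lean document; each statement's English description precedes it below -/
import Mathlib

section
/- Let n ≥ 1, k ≥ 1 and x ∈ ℝⁿ, and let μ_x be the empirical measure of x. Then the optimal social cost equals the Wasserstein projection distance of μ_x onto k-point measures: inf_{y ∈ ℝᵏ} (1/n) ∑_{i=1}^n min_{1≤j≤k} |x_i − y_j| = inf_{ν ∈ 𝒫_k(ℝ)} W₁(μ_x, ν). Moreover, if y ∈ ℝᵏ attains the left-hand infimum, then there is a probability measure ν supported on {y_1,…,y_k} with W₁(μ_x, ν) equal to this common value; conversely, if ν ∈ 𝒫_k(ℝ) attains the right-hand infimum, then any vector y ∈ ℝᵏ whose entries enumerate the support of ν attains the left-hand infimum. -/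
open MeasureTheory Filter Topology ENNReal

/-- The 1-Wasserstein distance between two measures on ℝ, defined as the infimum of
transport costs over couplings. -/
noncomputable def W1 (α β : Measure ℝ) : ℝ :=
  sInf {c : ℝ | ∃ π : Measure (ℝ × ℝ), IsProbabilityMeasure π ∧
    π.map Prod.fst = α ∧ π.map Prod.snd = β ∧ c = ∫ p, |p.1 - p.2| ∂π}

/-- The ∞-Wasserstein distance between two measures on ℝ. -/
noncomputable def Winf (α β : Measure ℝ) : ℝ :=
  sInf {c : ℝ | ∃ π : Measure (ℝ × ℝ), IsProbabilityMeasure π ∧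
    π.map Prod.fst = α ∧ π.map Prod.snd = β ∧
    c = essSup (fun p : ℝ × ℝ => |p.1 - p.2|) π}

/-- `Pk k` : probability measures on ℝ supported on at most `k` points. -/
def Pk (k : ℕ) : Set (Measure ℝ) :=
  {ν | IsProbabilityMeasure ν ∧ ∃ s : Finset ℝ, s.card ≤ k ∧ ν ((↑s : Set ℝ)ᶜ) = 0}

/-- Wasserstein projection distance of `μ` onto `k`-point measures. -/
noncomputable def projDist (k : ℕ) (μ : Measure ℝ) : ℝ :=
  sInf {c : ℝ | ∃ ν ∈ Pk k, c = W1 μ ν}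

/-- Empirical measure of a tuple of points. -/
noncomputable def empMeas {n : ℕ} (x : Fin n → ℝ) : Measure ℝ :=
  ((n : ℝ≥0∞))⁻¹ • ∑ i : Fin n, Measure.dirac (x i)

/-- Social cost of facility placement `y` for agents at `x`. -/
noncomputable def SC {n k : ℕ} (x : Fin n → ℝ) (y : Fin k → ℝ) : ℝ :=
  (n : ℝ)⁻¹ * ∑ i : Fin n, ⨅ j : Fin k, |x i - y j|

/-- Optimal social cost for `k` facilities. -/
noncomputable def SCopt (k : ℕ) {n : ℕ} (x : Fin n → ℝ) : ℝ :=
  ⨅ y : Fin k → ℝ, SC x y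

/-- Topological support of a measure on ℝ. -/
def msupport (ν : Measure ℝ) : Set ℝ := {t : ℝ | ∀ U ∈ nhds t, ν U ≠ 0}

/-- Cumulative distribution function of a measure on ℝ. -/
noncomputable def mcdf (μ : Measure ℝ) (t : ℝ) : ℝ := (μ (Set.Iic t)).toReal

/-- Quantile (generalized inverse c.d.f.) of a measure on ℝ. -/
noncomputable def mquantile (μ : Measure ℝ) (v : ℝ) : ℝ := sInf {t : ℝ | v ≤ mcdf μ t}

/-- Basic assumptions: `μ` is an absolutely continuous probability measure with density `ρ`,
supported on a (closed) interval `S`, with `ρ` positive on the interior of `S`, vanishing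
outside `S`, and differentiable on `S`. -/
def BasicAssumptions (μ : Measure ℝ) : Prop :=
  IsProbabilityMeasure μ ∧
  ∃ (ρ : ℝ → ℝ) (S : Set ℝ),
    μ = volume.withDensity (fun x => ENNReal.ofReal (ρ x)) ∧
    IsClosed S ∧ S.OrdConnected ∧ μ Sᶜ = 0 ∧
    (∀ x ∈ interior S, 0 < ρ x) ∧ (∀ x ∉ S, ρ x = 0) ∧
    DifferentiableOn ℝ ρ S

/-- The percentile mechanism: facility `j` is placed at the `(⌊(n-1)vⱼ⌋+1)`-th smallest
coordinate of `x`. -/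
noncomputable def percentileMech {k : ℕ} (v : Fin k → ℝ) {n : ℕ} (x : Fin n → ℝ) :
    Fin k → ℝ :=
  fun j =>
    if h : 0 < n then
      x (Tuple.sort x ⟨min ⌊((n : ℝ) - 1) * v j⌋₊ (n - 1),
        Nat.lt_of_le_of_lt (min_le_right _ _) (by omega)⟩)
    else 0

/-- Social cost of the percentile mechanism with percentile vector `v`. -/
noncomputable def SCv {k : ℕ} (v : Fin k → ℝ) {n : ℕ} (x : Fin n → ℝ) : ℝ :=
  SC x (percentileMech v x)

/-- Cumulative masses of the Voronoi cells of the points `y 0 < y 1 < ⋯ < y (k-1)`: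
`cellBd μ y j = F_μ(z_j)` where `z_j = (y (j-1) + y j)/2` for `1 ≤ j ≤ k-1` (1-based),
with the conventions `F_μ(z_0) = 0` and `F_μ(z_k) = 1`. -/
noncomputable def cellBd (μ : Measure ℝ) {k : ℕ} (y : Fin k → ℝ) (j : ℕ) : ℝ :=
  if h0 : j = 0 then 0
  else if hk : k ≤ j then 1
  else mcdf μ ((y ⟨j - 1, by omega⟩ + y ⟨j, by omega⟩) / 2)

/-- The measure `ν_{Q_v}`: atoms at the quantiles `F_μ^{[-1]}(vⱼ)` weighted by the masses of
their Voronoi cells. -/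
noncomputable def nuQ (μ : Measure ℝ) {k : ℕ} (v : Fin k → ℝ) : Measure ℝ :=
  ∑ i : Fin k,
    ENNReal.ofReal (cellBd μ (fun j => mquantile μ (v j)) ((i : ℕ) + 1) -
        cellBd μ (fun j => mquantile μ (v j)) (i : ℕ)) •
      Measure.dirac (mquantile μ (v i))

section Aux

variable {n k : ℕ}

lemma integrable_dirac'' {α : Type*} [MeasurableSpace α] [MeasurableSingletonClass α]
    (f : α → ℝ) (a : α) : Integrable f (Measure.dirac a) := by
  have h : (fun _ : α => f a) =ᵐ[Measure.dirac a] f := by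
    rw [MeasureTheory.ae_dirac_eq]
    exact Filter.eventually_pure.2 rfl
  exact (integrable_const (f a)).congr h

lemma cntMeas_prob {α : Type*} [MeasurableSpace α] (hn : 1 ≤ n) (a : Fin n → α) :
    IsProbabilityMeasure ((n : ℝ≥0∞)⁻¹ • ∑ i : Fin n, Measure.dirac (a i)) := by
  constructor
  rw [Measure.smul_apply, Measure.finset_sum_apply]
  simp only [measure_univ, Finset.sum_const, Finset.card_univ, Fintype.card_fin, nsmul_eq_mul,
    mul_one, smul_eq_mul]
  exact ENNReal.inv_mul_cancel (by exact_mod_cast Nat.one_le_iff_ne_zero.mp hn)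
    (ENNReal.natCast_ne_top n)

lemma integral_cntMeas {α : Type*} [MeasurableSpace α] [MeasurableSingletonClass α]
    (a : Fin n → α) (f : α → ℝ) :
    ∫ t, f t ∂((n : ℝ≥0∞)⁻¹ • ∑ i : Fin n, Measure.dirac (a i)) =
      (n : ℝ)⁻¹ * ∑ i : Fin n, f (a i) := by
  rw [integral_smul_measure,
    integral_finset_sum_measure (fun i _ => integrable_dirac'' f (a i))]
  simp [integral_dirac, ENNReal.toReal_inv, smul_eq_mul]

lemma cntMeas_null {α : Type*} [MeasurableSpace α] (a : Fin n → α) {s : Set α}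
    (hs : MeasurableSet s) (ha : ∀ i, a i ∈ s) :
    ((n : ℝ≥0∞)⁻¹ • ∑ i : Fin n, Measure.dirac (a i)) sᶜ = 0 := by
  rw [Measure.smul_apply, Measure.finset_sum_apply]
  have : ∀ i : Fin n, Measure.dirac (a i) sᶜ = 0 := by
    intro i
    rw [Measure.dirac_apply' _ hs.compl]
    simp [Set.indicator_apply, ha i]
  simp [this]

lemma cntMeas_map {α β : Type*} [MeasurableSpace α] [MeasurableSpace β] (a : Fin n → α)
    {f : α → β} (hf : Measurable f) :
    ((n : ℝ≥0∞)⁻¹ • ∑ i : Fin n, Measure.dirac (a i)).map f =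
      (n : ℝ≥0∞)⁻¹ • ∑ i : Fin n, Measure.dirac (f (a i)) := by
  rw [Measure.map_smul]
  congr 1
  have : ∀ s : Finset (Fin n), (∑ i ∈ s, Measure.dirac (a i)).map f
      = ∑ i ∈ s, Measure.dirac (f (a i)) := by
    intro s
    induction s using Finset.induction with
    | empty => simp
    | @insert a s h ih =>
      rw [Finset.sum_insert h, Measure.map_add _ _ hf, ih, Measure.map_dirac' hf,
        Finset.sum_insert h]
  exact this Finset.univ

/- basic facts about SC -/

lemma iInf_abs_nonneg (hk : 1 ≤ k) (t : ℝ) (y : Fin k → ℝ) : 0 ≤ ⨅ j : Fin k, |t - y j| :=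
  Real.iInf_nonneg fun j => abs_nonneg _

lemma SC_nonneg (hk : 1 ≤ k) (x : Fin n → ℝ) (y : Fin k → ℝ) : 0 ≤ SC x y := by
  unfold SC
  exact mul_nonneg (by positivity) (Finset.sum_nonneg fun i _ => iInf_abs_nonneg hk _ y)

lemma bddBelow_SC (hk : 1 ≤ k) (x : Fin n → ℝ) :
    BddBelow (Set.range fun y : Fin k → ℝ => SC x y) := by
  exact ⟨0, by rintro c ⟨y, rfl⟩; exact SC_nonneg hk x y⟩

lemma SCopt_le (hk : 1 ≤ k) (x : Fin n → ℝ) (y : Fin k → ℝ) : SCopt k x ≤ SC x y :=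
  ciInf_le (bddBelow_SC hk x) y

lemma continuous_g (hk : 1 ≤ k) (y : Fin k → ℝ) :
    Continuous fun t : ℝ => ⨅ j : Fin k, |t - y j| := by
  haveI : Nonempty (Fin k) := ⟨⟨0, hk⟩⟩
  have he : ∀ t : ℝ, (⨅ j : Fin k, |t - y j|) =
      Finset.univ.inf' Finset.univ_nonempty (fun j => |t - y j|) := by
    intro t
    exact (Finset.inf'_univ_eq_ciInf _).symm
  simp_rw [he]
  exact Continuous.finset_inf'_apply Finset.univ_nonempty
    (fun j _ => (continuous_id.sub continuous_const).abs)

lemma W1_nonneg (μ ν : Measure ℝ) : 0 ≤ W1 μ ν := by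
  apply Real.sInf_nonneg
  rintro c ⟨π, hπ, h1, h2, rfl⟩
  exact integral_nonneg fun p => abs_nonneg _

/-- upper bound : W1 to the projected measure is at most SC -/
lemma key_le (hn : 1 ≤ n) (hk : 1 ≤ k) (x : Fin n → ℝ) (y : Fin k → ℝ) :
    ∃ ν : Measure ℝ, IsProbabilityMeasure ν ∧ ν ((Set.range y)ᶜ) = 0 ∧
      (∃ s : Finset ℝ, s.card ≤ k ∧ ν ((↑s : Set ℝ)ᶜ) = 0) ∧
      W1 (empMeas x) ν ≤ SC x y := by
  haveI : Nonempty (Fin k) := ⟨⟨0, hk⟩⟩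
  have hσ : ∀ i : Fin n, ∃ j0 : Fin k, ∀ j : Fin k, |x i - y j0| ≤ |x i - y j| := by
    intro i
    obtain ⟨j0, _, hj0⟩ := Finset.exists_min_image Finset.univ
      (fun j => |x i - y j|) Finset.univ_nonempty
    exact ⟨j0, fun j => hj0 j (Finset.mem_univ j)⟩
  choose σ hσ using hσ
  have hattain : ∀ i : Fin n, (⨅ j : Fin k, |x i - y j|) = |x i - y (σ i)| := by
    intro i
    refine le_antisymm (ciInf_le ⟨0, by rintro c ⟨j, rfl⟩; exact abs_nonneg _⟩ (σ i))
      (le_ciInf (hσ i))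
  set a : Fin n → ℝ × ℝ := fun i => (x i, y (σ i)) with ha
  set π : Measure (ℝ × ℝ) := (n : ℝ≥0∞)⁻¹ • ∑ i : Fin n, Measure.dirac (a i) with hπdef
  set ν : Measure ℝ := (n : ℝ≥0∞)⁻¹ • ∑ i : Fin n, Measure.dirac (y (σ i)) with hνdef
  haveI hπp : IsProbabilityMeasure π := cntMeas_prob hn a
  have hfst : π.map Prod.fst = empMeas x := by
    rw [hπdef, cntMeas_map a measurable_fst]; rfl
  have hsnd : π.map Prod.snd = ν := by
    rw [hπdef, cntMeas_map a measurable_snd]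
  have hν0 : ν ((Set.range y)ᶜ) = 0 :=
    cntMeas_null _ (Set.finite_range y).measurableSet (fun i => ⟨σ i, rfl⟩)
  refine ⟨ν, cntMeas_prob hn _, hν0, ⟨Finset.image y Finset.univ, ?_, ?_⟩, ?_⟩
  · exact (Finset.card_image_le).trans (by simp)
  · apply cntMeas_null _ (Finset.image y Finset.univ).measurableSet
    intro i; simp
  · have hc : (∫ p, |p.1 - p.2| ∂π) = SC x y := by
      rw [hπdef, integral_cntMeas a (fun p => |p.1 - p.2|)]
      unfold SC
      congr 1
      exact Finset.sum_congr rfl fun i _ => by rw [hattain i]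
    have hmem : SC x y ∈ {c : ℝ | ∃ π : Measure (ℝ × ℝ), IsProbabilityMeasure π ∧
        π.map Prod.fst = empMeas x ∧ π.map Prod.snd = ν ∧ c = ∫ p, |p.1 - p.2| ∂π} :=
      ⟨π, hπp, hfst, hsnd, hc.symm⟩
    apply csInf_le _ hmem
    exact ⟨0, by rintro c ⟨π', hπ', h1, h2, rfl⟩; exact integral_nonneg fun p => abs_nonneg _⟩

/-- lower bound : SC x y ≤ W1 whenever ν is carried by range y -/
lemma key_ge (hn : 1 ≤ n) (hk : 1 ≤ k) (x : Fin n → ℝ) (y : Fin k → ℝ) (ν : Measure ℝ)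
    (hνp : IsProbabilityMeasure ν) (hν0 : ν ((Set.range y)ᶜ) = 0) :
    SC x y ≤ W1 (empMeas x) ν := by
  haveI : Nonempty (Fin k) := ⟨⟨0, hk⟩⟩
  haveI : IsProbabilityMeasure (empMeas x) := cntMeas_prob hn x
  apply le_csInf
  · refine ⟨∫ p, |p.1 - p.2| ∂((empMeas x).prod ν), (empMeas x).prod ν, inferInstance, ?_, ?_, rfl⟩
    · simp [Measure.map_fst_prod]
    · simp [Measure.map_snd_prod]
  rintro c ⟨π, hπp, hfst, hsnd, rfl⟩
  haveI := hπp
  set g : ℝ → ℝ := fun t => ⨅ j : Fin k, |t - y j| with hg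
  have hgc : Continuous g := continuous_g hk y
  haveI : Nonempty (Fin n) := ⟨⟨0, hn⟩⟩
  set C : ℝ := (Finset.univ.sup' (Finset.univ_nonempty (α := Fin n)) fun i => |x i|) +
      (Finset.univ.sup' (Finset.univ_nonempty (α := Fin k)) fun j => |y j|) with hC
  have hae1 : ∀ᵐ p ∂π, p.1 ∈ Set.range x := by
    rw [MeasureTheory.ae_iff]
    have : {p : ℝ × ℝ | ¬ p.1 ∈ Set.range x} = Prod.fst ⁻¹' (Set.range x)ᶜ := rfl
    rw [this, ← Measure.map_apply measurable_fst (Set.finite_range x).measurableSet.compl, hfst]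
    exact cntMeas_null x (Set.finite_range x).measurableSet (fun i => ⟨i, rfl⟩)
  have hae2 : ∀ᵐ p ∂π, p.2 ∈ Set.range y := by
    rw [MeasureTheory.ae_iff]
    have : {p : ℝ × ℝ | ¬ p.2 ∈ Set.range y} = Prod.snd ⁻¹' (Set.range y)ᶜ := rfl
    rw [this, ← Measure.map_apply measurable_snd (Set.finite_range y).measurableSet.compl, hsnd]
    exact hν0
  have hbound : ∀ᵐ p ∂π, ‖|p.1 - p.2|‖ ≤ C := by
    filter_upwards [hae1, hae2] with p ⟨i, hi⟩ ⟨j, hj⟩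
    rw [Real.norm_eq_abs, abs_abs, ← hi, ← hj]
    calc |x i - y j| ≤ |x i| + |y j| := abs_sub _ _
    _ ≤ C := add_le_add (Finset.le_sup' (f := fun i => |x i|) (Finset.mem_univ i))
        (Finset.le_sup' (f := fun j => |y j|) (Finset.mem_univ j))
  have hint1 : Integrable (fun p : ℝ × ℝ => |p.1 - p.2|) π :=
    (integrable_const C).mono'
      ((measurable_fst.sub measurable_snd).abs).aestronglyMeasurable hbound
  have hbound2 : ∀ᵐ p ∂π, ‖g p.1‖ ≤ C := by
    filter_upwards [hae1] with p ⟨i, hi⟩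
    rw [Real.norm_eq_abs, abs_of_nonneg (iInf_abs_nonneg hk _ y)]
    calc g p.1 ≤ |p.1 - y ⟨0, hk⟩| := ciInf_le ⟨0, by rintro c ⟨j, rfl⟩; exact abs_nonneg _⟩ _
    _ ≤ |p.1| + |y ⟨0, hk⟩| := abs_sub _ _
    _ ≤ C := by
        rw [← hi]
        exact add_le_add (Finset.le_sup' (f := fun i => |x i|) (Finset.mem_univ i))
          (Finset.le_sup' (f := fun j => |y j|) (Finset.mem_univ _))
  have hint2 : Integrable (fun p : ℝ × ℝ => g p.1) π :=
    (integrable_const C).mono' (hgc.comp continuous_fst).aestronglyMeasurable hbound2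
  have hle : ∀ᵐ p ∂π, g p.1 ≤ |p.1 - p.2| := by
    filter_upwards [hae2] with p ⟨j, hj⟩
    rw [← hj]
    exact ciInf_le ⟨0, by rintro c ⟨j', rfl⟩; exact abs_nonneg _⟩ j
  have h1 : SC x y = ∫ t, g t ∂(empMeas x) := by
    have := integral_cntMeas (n := n) x g
    rw [show empMeas x = (n : ℝ≥0∞)⁻¹ • ∑ i : Fin n, Measure.dirac (x i) from rfl, this]
    rfl
  have h2 : ∫ t, g t ∂(empMeas x) = ∫ p, g p.1 ∂π := by
    rw [← hfst, integral_map measurable_fst.aemeasurable]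
    rw [hfst]
    exact hgc.aestronglyMeasurable
  rw [h1, h2]
  exact integral_mono_ae hint2 hint1 hle

/-- finite support measures vanish off their topological support -/
lemma msupport_null (ν : Measure ℝ) (s : Finset ℝ) (hnull : ν ((↑s : Set ℝ)ᶜ) = 0) :
    ν ((msupport ν)ᶜ) = 0 := by
  have hsub : (msupport ν)ᶜ ⊆ (↑s : Set ℝ)ᶜ ∪ (⋃ a ∈ s, ({a} ∩ (msupport ν)ᶜ)) := by
    intro t ht
    by_cases h : t ∈ (↑s : Set ℝ)
    · exact Or.inr (Set.mem_biUnion h ⟨rfl, ht⟩)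
    · exact Or.inl h
  apply measure_mono_null hsub
  apply measure_union_null hnull
  have : ∀ a ∈ s, ν ({a} ∩ (msupport ν)ᶜ) = 0 := by
    intro a _
    by_cases ha : a ∈ msupport ν
    · have : ({a} : Set ℝ) ∩ (msupport ν)ᶜ = ∅ := by
        ext t; simp only [Set.mem_inter_iff, Set.mem_singleton_iff, Set.mem_compl_iff,
          Set.mem_empty_iff_false, iff_false, not_and]
        rintro rfl; exact fun h => h ha
      simp [this]
    · simp only [msupport, Set.mem_setOf_eq, not_forall] at ha
      obtain ⟨U, hU, hνU⟩ := ha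
      push_neg at hνU
      refine measure_mono_null ?_ hνU
      rintro t ⟨ht, -⟩
      rw [Set.mem_singleton_iff] at ht
      subst ht
      exact mem_of_mem_nhds hU
  exact le_antisymm ((measure_biUnion_finset_le s _).trans
    (le_of_eq (Finset.sum_eq_zero this))) (zero_le)

/-- from a k-point measure get an enumerating y -/
lemma Pk_enum (hk : 1 ≤ k) {ν : Measure ℝ} (hν : ν ∈ Pk k) :
    ∃ y : Fin k → ℝ, ν ((Set.range y)ᶜ) = 0 := by
  obtain ⟨hprob, s, hcard, hnull⟩ := hν
  have hsne : s.Nonempty := by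
    rw [Finset.nonempty_iff_ne_empty]
    rintro rfl
    have h1 : ν Set.univ = 0 := by simpa using hnull
    have h2 := hprob.measure_univ
    rw [h1] at h2
    exact zero_ne_one h2
  obtain ⟨a, ha⟩ := hsne
  refine ⟨fun j => if h : (j : ℕ) < s.card then (s.equivFin.symm ⟨(j : ℕ), h⟩ : ℝ) else a, ?_⟩
  apply measure_mono_null _ hnull
  rw [Set.compl_subset_compl]
  intro b hb
  set i : Fin s.card := s.equivFin ⟨b, hb⟩ with hi
  have hik : (i : ℕ) < k := lt_of_lt_of_le i.isLt hcard
  refine ⟨⟨(i : ℕ), hik⟩, ?_⟩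
  simp only
  rw [dif_pos (by simpa using i.isLt)]
  have : (⟨((⟨(i : ℕ), hik⟩ : Fin k) : ℕ), by simpa using i.isLt⟩ : Fin s.card) = i := by
    apply Fin.ext; rfl
  rw [this, hi, Equiv.symm_apply_apply]

end Aux

/-- The optimal social cost equals the Wasserstein projection distance of the
empirical measure onto `k`-point measures; attainment transfers in both directions. -/
theorem stmt0 {n k : ℕ} (hn : 1 ≤ n) (hk : 1 ≤ k) (x : Fin n → ℝ) :
    SCopt k x = projDist k (empMeas x) ∧
    (∀ y : Fin k → ℝ, SC x y = SCopt k x →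
      ∃ ν : Measure ℝ, IsProbabilityMeasure ν ∧ ν ((Set.range y)ᶜ) = 0 ∧
        W1 (empMeas x) ν = SCopt k x) ∧
    (∀ ν ∈ Pk k, W1 (empMeas x) ν = projDist k (empMeas x) →
      ∀ y : Fin k → ℝ, Set.range y = msupport ν → SC x y = SCopt k x) := by

  have hbdd : BddBelow {c : ℝ | ∃ ν ∈ Pk k, c = W1 (empMeas x) ν} :=
    ⟨0, by rintro c ⟨ν, hν, rfl⟩; exact W1_nonneg _ _⟩
  have hSCopt_le_W1 : ∀ ν ∈ Pk k, SCopt k x ≤ W1 (empMeas x) ν := by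
    intro ν hν
    obtain ⟨y, hy0⟩ := Pk_enum hk hν
    exact (SCopt_le hk x y).trans (key_ge hn hk x y ν hν.1 hy0)
  have hproj_le : ∀ y : Fin k → ℝ, projDist k (empMeas x) ≤ SC x y := by
    intro y
    obtain ⟨ν, hp, h0, hPk, hW⟩ := key_le hn hk x y
    exact le_trans (csInf_le hbdd ⟨ν, ⟨hp, hPk⟩, rfl⟩) hW
  have hne : {c : ℝ | ∃ ν ∈ Pk k, c = W1 (empMeas x) ν}.Nonempty := by
    obtain ⟨ν, hp, h0, hPk, hW⟩ := key_le hn hk x (fun _ => 0)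
    exact ⟨_, ⟨ν, ⟨hp, hPk⟩, rfl⟩⟩
  have hmain : SCopt k x = projDist k (empMeas x) := by
    apply le_antisymm
    · exact le_csInf hne (by rintro c ⟨ν, hν, rfl⟩; exact hSCopt_le_W1 ν hν)
    · exact le_ciInf hproj_le
  refine ⟨hmain, ?_, ?_⟩
  · intro y hy
    obtain ⟨ν, hp, h0, hPk, hW⟩ := key_le hn hk x y
    exact ⟨ν, hp, h0, le_antisymm (le_of_le_of_eq hW hy) (hSCopt_le_W1 ν ⟨hp, hPk⟩)⟩
  · intro ν hν hW y hy
    have h0 : ν ((Set.range y)ᶜ) = 0 := by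
      rw [hy]
      obtain ⟨hp, s, hc, hnull⟩ := hν
      exact msupport_null ν s hnull
    exact le_antisymm
      ((key_ge hn hk x y ν hν.1 h0).trans (le_of_eq (hW.trans hmain.symm)))
      (SCopt_le hk x y)
end

section
/- Let n ≥ 1, k ≥ 1, x ∈ ℝⁿ and y ∈ ℝᵏ. Then the social cost of placing facilities at y equals the Wasserstein distance from the empirical measure to the best reweighting on the fixed support: (1/n) ∑_{i=1}^n min_{1≤j≤k} |x_i − y_j| = inf { W₁(μ_x, λ) : λ a probability measure on ℝ with support contained in {y_1,…,y_k} }, and this infimum is attained. -/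
open MeasureTheory Filter Topology ENNReal

lemma map_finset_sumX {α β ι : Type*} [MeasurableSpace α] [MeasurableSpace β]
    {f : α → β} (hf : Measurable f) (s : Finset ι) (μ : ι → Measure α) :
    (∑ i ∈ s, μ i).map f = ∑ i ∈ s, (μ i).map f := by
  induction s using Finset.cons_induction with
  | empty => simp
  | cons a s ha ih => simp [Finset.sum_cons, Measure.map_add _ _ hf, ih]

/-- The social cost of placing the facilities at `y` equals the Wasserstein
distance from the empirical measure to the best reweighting on the fixed support
`{y 0, …, y (k-1)}`, and the infimum is attained. -/
theorem stmt1 {n k : ℕ} (hn : 1 ≤ n) (hk : 1 ≤ k) (x : Fin n → ℝ) (y : Fin k → ℝ) :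
    SC x y = sInf {c : ℝ | ∃ lam : Measure ℝ, IsProbabilityMeasure lam ∧
        lam ((Set.range y)ᶜ) = 0 ∧ c = W1 (empMeas x) lam} ∧
    ∃ lam : Measure ℝ, IsProbabilityMeasure lam ∧ lam ((Set.range y)ᶜ) = 0 ∧
      W1 (empMeas x) lam = SC x y := by
  haveI : Nonempty (Fin k) := ⟨⟨0, hk⟩⟩
  haveI : Nonempty (Fin n) := ⟨⟨0, hn⟩⟩
  have hn0 : (n : ℝ≥0∞) ≠ 0 := Nat.cast_ne_zero.mpr (by omega)
  set f : ℝ → ℝ := fun t => ⨅ j, |t - y j| with hfdef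
  have hbdd : ∀ t : ℝ, BddBelow (Set.range fun j : Fin k => |t - y j|) := by
    intro t; exact ⟨0, by rintro _ ⟨j, rfl⟩; positivity⟩
  have hf0 : ∀ t, 0 ≤ f t := fun t => le_ciInf fun j => abs_nonneg _
  have hfle : ∀ t (j : Fin k), f t ≤ |t - y j| := fun t j => ciInf_le (hbdd t) j
  have fcont : Continuous f := by
    refine (LipschitzWith.of_le_add fun s t => ?_).continuous
    have hle : f s - dist s t ≤ f t := by
      refine le_ciInf fun j => ?_
      have h1 := hfle s j
      rw [Real.dist_eq]
      have h2 : |s - y j| ≤ |t - y j| + |s - t| := by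
        rw [show s - y j = (t - y j) + (s - t) by ring]
        exact abs_add_le _ _
      linarith
    linarith
  -- choose nearest facility for each agent
  have hexists : ∀ i : Fin n, ∃ j0 : Fin k, ∀ j, |x i - y j0| ≤ |x i - y j| := fun i =>
    Finite.exists_min fun j => |x i - y j|
  choose σ hσ using hexists
  have hfx : ∀ i, f (x i) = |x i - y (σ i)| := fun i =>
    le_antisymm (hfle _ _) (le_ciInf (hσ i))
  have hSC : SC x y = (n : ℝ)⁻¹ * ∑ i, f (x i) := rfl
  -- empirical measure facts
  have hemp_apply : ∀ s : Set ℝ, empMeas x s = (n : ℝ≥0∞)⁻¹ * ∑ i, s.indicator 1 (x i) := by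
    intro s
    simp [empMeas, Measure.smul_apply, Measure.coe_finset_sum, Measure.dirac_apply, smul_eq_mul]
  have hemp_prob : IsProbabilityMeasure (empMeas x) := by
    constructor
    rw [hemp_apply]
    simp [ENNReal.inv_mul_cancel hn0 (natCast_ne_top n)]
  have hxmeas : MeasurableSet ((Set.range x)ᶜ) := (Set.finite_range x).measurableSet.compl
  have hymeas : MeasurableSet ((Set.range y)ᶜ) := (Set.finite_range y).measurableSet.compl
  have hemp_supp : empMeas x ((Set.range x)ᶜ) = 0 := by
    rw [hemp_apply]
    have h : ∀ i : Fin n, ((Set.range x)ᶜ).indicator (1 : ℝ → ℝ≥0∞) (x i) = 0 := fun i =>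
      Set.indicator_of_notMem (by simp) 1
    simp [h]
  -- integrals against diracs
  have hdirac_int : ∀ (g : ℝ → ℝ) (a : ℝ), Integrable g (Measure.dirac a) := fun g a =>
    (integrable_const (g a)).congr (ae_eq_dirac g).symm
  have hdirac_int2 : ∀ (g : ℝ × ℝ → ℝ) (a : ℝ × ℝ), Integrable g (Measure.dirac a) := fun g a =>
    (integrable_const (g a)).congr (ae_eq_dirac g).symm
  have hint_emp : ∫ t, f t ∂(empMeas x) = (n : ℝ)⁻¹ * ∑ i, f (x i) := by
    rw [empMeas, integral_smul_measure, integral_finset_sum_measure fun i _ => hdirac_int f (x i)]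
    simp [integral_dirac, ENNReal.toReal_inv, smul_eq_mul]
  -- key lower bound
  have key : ∀ lam : Measure ℝ, IsProbabilityMeasure lam → lam ((Set.range y)ᶜ) = 0 →
      ∀ π : Measure (ℝ × ℝ), IsProbabilityMeasure π → π.map Prod.fst = empMeas x →
      π.map Prod.snd = lam → SC x y ≤ ∫ p, |p.1 - p.2| ∂π := by
    intro lam hlam hlsupp π hπ hfst hsnd
    have h1 : ∀ᵐ p ∂π, p.1 ∈ Set.range x := by
      rw [ae_iff]
      have he : {p : ℝ × ℝ | ¬ p.1 ∈ Set.range x} = Prod.fst ⁻¹' (Set.range x)ᶜ := rfl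
      rw [he, ← Measure.map_apply measurable_fst hxmeas, hfst, hemp_supp]
    have h2 : ∀ᵐ p ∂π, p.2 ∈ Set.range y := by
      rw [ae_iff]
      have he : {p : ℝ × ℝ | ¬ p.2 ∈ Set.range y} = Prod.snd ⁻¹' (Set.range y)ᶜ := rfl
      rw [he, ← Measure.map_apply measurable_snd hymeas, hsnd, hlsupp]
    set C : ℝ := (Finset.univ.sup' Finset.univ_nonempty fun i : Fin n => |x i|) +
      (Finset.univ.sup' Finset.univ_nonempty fun j : Fin k => |y j|) with hCdef
    have hC : ∀ (i : Fin n) (j : Fin k), |x i - y j| ≤ C := by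
      intro i j
      have h3 : |x i - y j| ≤ |x i| + |y j| := abs_sub _ _
      have h4 : |x i| ≤ Finset.univ.sup' Finset.univ_nonempty fun i : Fin n => |x i| :=
        Finset.le_sup' (fun i : Fin n => |x i|) (Finset.mem_univ i)
      have h5 : |y j| ≤ Finset.univ.sup' Finset.univ_nonempty fun j : Fin k => |y j| :=
        Finset.le_sup' (fun j : Fin k => |y j|) (Finset.mem_univ j)
      linarith
    have hcost_meas : AEStronglyMeasurable (fun p : ℝ × ℝ => |p.1 - p.2|) π :=
      ((continuous_fst.sub continuous_snd).abs).aestronglyMeasurable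
    have hcost_int : Integrable (fun p : ℝ × ℝ => |p.1 - p.2|) π := by
      refine Integrable.mono' (integrable_const C) hcost_meas ?_
      filter_upwards [h1, h2] with p hp1 hp2
      obtain ⟨i, hi⟩ := hp1
      obtain ⟨j, hj⟩ := hp2
      rw [Real.norm_eq_abs, abs_abs, ← hi, ← hj]
      exact hC i j
    have hmono : ∫ p, f p.1 ∂π ≤ ∫ p, |p.1 - p.2| ∂π := by
      refine integral_mono_of_nonneg (Filter.Eventually.of_forall fun p => hf0 _) hcost_int ?_
      filter_upwards [h2] with p hp2
      obtain ⟨j, hj⟩ := hp2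
      rw [← hj]
      exact hfle p.1 j
    have heq : ∫ p, f p.1 ∂π = ∫ t, f t ∂(empMeas x) := by
      rw [← hfst, integral_map measurable_fst.aemeasurable
        (by rw [hfst]; exact fcont.aestronglyMeasurable)]
    rw [hSC, ← hint_emp, ← heq]
    exact hmono
  -- explicit optimal lam and coupling
  set lam0 : Measure ℝ := (n : ℝ≥0∞)⁻¹ • ∑ i : Fin n, Measure.dirac (y (σ i)) with hlam0def
  set π₀ : Measure (ℝ × ℝ) := (n : ℝ≥0∞)⁻¹ • ∑ i : Fin n, Measure.dirac (x i, y (σ i))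
    with hπ₀def
  have hlam0_apply : ∀ s : Set ℝ, lam0 s = (n : ℝ≥0∞)⁻¹ * ∑ i, s.indicator 1 (y (σ i)) := by
    intro s
    simp [hlam0def, Measure.smul_apply, Measure.coe_finset_sum, Measure.dirac_apply, smul_eq_mul]
  have hlam0_prob : IsProbabilityMeasure lam0 := by
    constructor
    rw [hlam0_apply]
    simp [ENNReal.inv_mul_cancel hn0 (natCast_ne_top n)]
  have hlam0_supp : lam0 ((Set.range y)ᶜ) = 0 := by
    rw [hlam0_apply]
    have h : ∀ i : Fin n, ((Set.range y)ᶜ).indicator (1 : ℝ → ℝ≥0∞) (y (σ i)) = 0 := fun i =>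
      Set.indicator_of_notMem (by simp) 1
    simp [h]
  have hπ₀_prob : IsProbabilityMeasure π₀ := by
    constructor
    simp [hπ₀def, Measure.smul_apply, Measure.coe_finset_sum, smul_eq_mul,
      ENNReal.inv_mul_cancel hn0 (natCast_ne_top n)]
  have hπ₀_fst : π₀.map Prod.fst = empMeas x := by
    rw [hπ₀def, Measure.map_smul, map_finset_sumX measurable_fst, empMeas]
    simp [Measure.map_dirac' measurable_fst]
  have hπ₀_snd : π₀.map Prod.snd = lam0 := by
    rw [hπ₀def, Measure.map_smul, map_finset_sumX measurable_snd, hlam0def]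
    simp [Measure.map_dirac' measurable_snd]
  have hπ₀_cost : ∫ p, |p.1 - p.2| ∂π₀ = SC x y := by
    rw [hπ₀def, integral_smul_measure,
      integral_finset_sum_measure fun i _ => hdirac_int2 _ _]
    simp only [integral_dirac]
    rw [hSC]
    simp [ENNReal.toReal_inv, smul_eq_mul, hfx]
  -- W1 to lam0 equals SC
  have hW1 : W1 (empMeas x) lam0 = SC x y := by
    rw [W1]
    apply le_antisymm
    · apply csInf_le
      · refine ⟨SC x y, ?_⟩
        rintro c ⟨π, hπ, hfst, hsnd, rfl⟩
        exact key lam0 hlam0_prob hlam0_supp π hπ hfst hsnd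
      · exact ⟨π₀, hπ₀_prob, hπ₀_fst, hπ₀_snd, hπ₀_cost.symm⟩
    · apply le_csInf
      · exact ⟨SC x y, π₀, hπ₀_prob, hπ₀_fst, hπ₀_snd, hπ₀_cost.symm⟩
      · rintro c ⟨π, hπ, hfst, hsnd, rfl⟩
        exact key lam0 hlam0_prob hlam0_supp π hπ hfst hsnd
  -- general lower bound for W1
  have hW1_ge : ∀ lam : Measure ℝ, IsProbabilityMeasure lam → lam ((Set.range y)ᶜ) = 0 →
      SC x y ≤ W1 (empMeas x) lam := by
    intro lam hlam hls
    haveI := hemp_prob; haveI := hlam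
    rw [W1]
    apply le_csInf
    · refine ⟨∫ p, |p.1 - p.2| ∂((empMeas x).prod lam),
        (empMeas x).prod lam, inferInstance, ?_, ?_, rfl⟩
      · rw [Measure.map_fst_prod, measure_univ, one_smul]
      · rw [Measure.map_snd_prod, measure_univ, one_smul]
    · rintro c ⟨π, hπ, hfst, hsnd, rfl⟩
      exact key lam hlam hls π hπ hfst hsnd
  refine ⟨?_, lam0, hlam0_prob, hlam0_supp, hW1⟩
  apply le_antisymm
  · apply le_csInf
    · exact ⟨SC x y, lam0, hlam0_prob, hlam0_supp, hW1.symm⟩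
    · rintro c ⟨lam, h1, h2, rfl⟩
      exact hW1_ge lam h1 h2
  · apply csInf_le
    · refine ⟨SC x y, ?_⟩
      rintro c ⟨lam, h1, h2, rfl⟩
      exact hW1_ge lam h1 h2
    · exact ⟨lam0, hlam0_prob, hlam0_supp, hW1.symm⟩
end

section
/- Let μ be a Borel probability measure on ℝ satisfying the basic assumptions and with finite first moment, let k ≥ 1, let v ∈ (0,1)ᵏ be nondecreasing, and set q_j := F_μ^{[-1]}(v_j). Then W₁(μ, ν_{Q_v}) = ∫_ℝ min_{1≤j≤k} |x − q_j| dμ(x); consequently ν_{Q_v} minimizes λ ↦ W₁(μ, λ) over all probability measures λ on ℝ with support contained in {q_1,…,q_k}. -/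
open MeasureTheory Filter Topology ENNReal

/-!
The Voronoi cells of the quantiles `q₁ ≤ ⋯ ≤ q_k` are the intervals `(z_{j-1}, z_j]`, so
`ν_{Q_v}` is the push-forward of `μ` under the nearest-point map `T`. The coupling
`(id, T)_# μ` has cost `∫ d(x, {q_j}) dμ`; conversely, any coupling of `μ` with a measure `λ`
concentrated on `{q_j}` moves each `x` to some `q_j`, at cost at least `d(x, {q_j})`. Hence
`W₁(μ, ν_{Q_v}) = ∫ d(x, {q_j}) dμ ≤ W₁(μ, λ)`.
-/

open Set Metric

section Voronoi

variable {n : ℕ} {q : Fin (n + 1) → ℝ}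

noncomputable def voronoiMid (q : Fin (n + 1) → ℝ) (i : Fin n) : ℝ :=
  (q i.castSucc + q i.succ) / 2

/-- For monotone `q` the cell of index `i` is `(z_{i-1}, z_i]`, matching the masses `cellBd`. -/
noncomputable def voronoiIndex (q : Fin (n + 1) → ℝ) (x : ℝ) : Fin (n + 1) :=
  ⟨(Finset.univ.filter (voronoiMid q · < x)).card,
    Nat.lt_succ_of_le ((Finset.card_filter_le _ _).trans_eq (Finset.card_fin n))⟩

lemma voronoiMid_mono (hq : Monotone q) : Monotone (voronoiMid q) := fun i j hij => by
  have := hq (Fin.castSucc_le_castSucc_iff.2 hij)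
  have := hq (Fin.succ_le_succ_iff.2 hij)
  unfold voronoiMid; linarith

lemma voronoiIndex_mono (q : Fin (n + 1) → ℝ) : Monotone (voronoiIndex q) := fun _ _ hxy =>
  Fin.mk_le_mk.2 <| Finset.card_le_card <| Finset.monotone_filter_right _
    fun _ _ h => h.trans_le hxy

lemma measurable_voronoiIndex (q : Fin (n + 1) → ℝ) : Measurable (voronoiIndex q) :=
  (voronoiIndex_mono q).measurable

lemma castSucc_lt_voronoiIndex_iff (hq : Monotone q) (i : Fin n) (x : ℝ) :
    i.castSucc < voronoiIndex q x ↔ voronoiMid q i < x := by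
  rw [Fin.lt_def, Fin.val_castSucc]
  constructor
  · intro h
    by_contra! hx
    have hsub : Finset.univ.filter (voronoiMid q · < x) ⊆ Finset.Iio i := fun j hj => by
      simp only [Finset.mem_filter, Finset.mem_univ, true_and] at hj
      exact Finset.mem_Iio.2 (lt_of_not_ge fun hij => (hj.trans_le hx).not_ge
        (voronoiMid_mono hq hij))
    have := Finset.card_le_card hsub
    rw [Fin.card_Iio] at this
    exact (h.trans_le this).false
  · intro hx
    have hsub : Finset.Iic i ⊆ Finset.univ.filter (voronoiMid q · < x) := fun j hj =>
      Finset.mem_filter.2 ⟨Finset.mem_univ _,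
        (voronoiMid_mono hq (Finset.mem_Iic.1 hj)).trans_lt hx⟩
    have := Finset.card_le_card hsub
    rw [Fin.card_Iic] at this
    exact this

-- `(x - a)² - (x - b)² = (b - a) (2x - a - b)`.
lemma abs_sub_le_abs_sub_of_mul_nonneg {x a b : ℝ} (h : 0 ≤ (b - a) * (2 * x - a - b)) :
    |x - b| ≤ |x - a| := by
  rw [← sq_le_sq]; nlinarith

lemma abs_sub_voronoiIndex_le (hq : Monotone q) (x : ℝ) (j : Fin (n + 1)) :
    |x - q (voronoiIndex q x)| ≤ |x - q j| := by
  rcases lt_trichotomy j (voronoiIndex q x) with hj | hj | hj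
  · obtain ⟨i, hi⟩ := Fin.exists_succ_eq_of_ne_zero (Fin.ne_zero_of_lt hj)
    have hmid := (castSucc_lt_voronoiIndex_iff hq i x).1 (hi ▸ Fin.castSucc_lt_succ)
    have hji : q j ≤ q i.castSucc := hq (Fin.le_castSucc_iff.2 (hi ▸ hj))
    rw [← hi]
    refine abs_sub_le_abs_sub_of_mul_nonneg (mul_nonneg ?_ ?_) <;>
      unfold voronoiMid at hmid <;> linarith [hq (Fin.castSucc_le_succ i)]
  · rw [hj]
  · obtain ⟨i, hi⟩ := Fin.exists_castSucc_eq.2 (Fin.ne_last_of_lt hj)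
    have hmid := le_of_not_gt <| (castSucc_lt_voronoiIndex_iff hq i x).not.1 (hi ▸ lt_irrefl _)
    have hij : q i.succ ≤ q j := hq (Fin.castSucc_lt_iff_succ_le.1 (hi ▸ hj))
    rw [← hi]
    refine abs_sub_le_abs_sub_of_mul_nonneg (mul_nonneg_of_nonpos_of_nonpos ?_ ?_) <;>
      unfold voronoiMid at hmid <;> linarith [hq (Fin.castSucc_le_succ i)]

lemma abs_sub_voronoiIndex_eq_infDist (hq : Monotone q) (x : ℝ) :
    |x - q (voronoiIndex q x)| = infDist x (range q) :=
  le_antisymm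
    ((le_infDist (range_nonempty q)).2 <| by
      rintro _ ⟨j, rfl⟩
      exact (abs_sub_voronoiIndex_le hq x j).trans_eq (Real.dist_eq _ _).symm)
    ((infDist_le_dist_of_mem (mem_range_self _)).trans_eq (Real.dist_eq _ _))

end Voronoi

section Cells

variable {n : ℕ} {q : Fin (n + 1) → ℝ} (μ : Measure ℝ) [IsProbabilityMeasure μ]

lemma cellBd_eq_measureReal (hq : Monotone q) {m : ℕ} (hm : m ≤ n + 1) :
    cellBd μ q m = μ.real {x | (voronoiIndex q x : ℕ) < m} := by
  rcases Nat.eq_zero_or_pos m with rfl | hm0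
  · simp [cellBd]
  rcases hm.eq_or_lt with rfl | hmn
  · rw [show {x | (voronoiIndex q x : ℕ) < n + 1} = univ from
      eq_univ_of_forall fun x => (voronoiIndex q x).2]
    simp [cellBd]
  obtain ⟨i, rfl⟩ : ∃ i : Fin n, m = i + 1 := ⟨⟨m - 1, by omega⟩, by simp; omega⟩
  have hcell : {x | (voronoiIndex q x : ℕ) < i + 1} = Iic (voronoiMid q i) := by
    ext x
    rw [mem_Iic, ← not_lt, ← castSucc_lt_voronoiIndex_iff hq, Fin.lt_def,
      Fin.val_castSucc]
    exact Nat.lt_succ_iff.trans not_lt.symm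
  rw [hcell, cellBd, dif_neg (by omega), dif_neg (by omega), mcdf, measureReal_def]
  rfl

lemma measure_voronoiIndex_preimage (hq : Monotone q) (i : Fin (n + 1)) :
    μ (voronoiIndex q ⁻¹' {i}) = ENNReal.ofReal (cellBd μ q (i + 1) - cellBd μ q i) := by
  have hmeas (m : ℕ) : MeasurableSet {x | (voronoiIndex q x : ℕ) < m} :=
    measurable_voronoiIndex q
      (MeasurableSet.of_discrete (s := {j : Fin (n + 1) | (j : ℕ) < m}))
  have hdiff : voronoiIndex q ⁻¹' {i} =
      {x | (voronoiIndex q x : ℕ) < i + 1} \ {x | (voronoiIndex q x : ℕ) < i} := by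
    ext x; simp [Fin.ext_iff]; omega
  rw [cellBd_eq_measureReal μ hq (m := i + 1) (by omega), cellBd_eq_measureReal μ hq i.2.le,
    hdiff,
    ← measureReal_sdiff (s₁ := {x | (voronoiIndex q x : ℕ) < i + 1})
      (s₂ := {x | (voronoiIndex q x : ℕ) < i}) (fun _ hx => Nat.lt_succ_of_lt hx) (hmeas _),
    ofReal_measureReal]

end Cells

lemma map_comp_eq_sum_smul_dirac {α ι β : Type*} [MeasurableSpace α] [Fintype ι]
    [MeasurableSpace ι] [MeasurableSingletonClass ι] [MeasurableSpace β] (μ : Measure α)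
    {f : α → ι} (hf : Measurable f) (g : ι → β) :
    μ.map (g ∘ f) = ∑ i, μ (f ⁻¹' {i}) • Measure.dirac (g i) := by
  have hg : Measurable g := measurable_of_countable g
  rw [← Measure.map_map hg hf, ← Measure.sum_smul_dirac (μ.map f),
    Measure.map_sum hg.aemeasurable, Measure.sum_fintype]
  simp only [Measure.map_smul, Measure.map_dirac' hg,
    Measure.map_apply hf (measurableSet_singleton _)]

lemma nuQ_eq_map (μ : Measure ℝ) [IsProbabilityMeasure μ] {n : ℕ} (v : Fin (n + 1) → ℝ)
    (hq : Monotone fun j => mquantile μ (v j)) :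
    nuQ μ v =
      μ.map ((fun j => mquantile μ (v j)) ∘ voronoiIndex fun j => mquantile μ (v j)) := by
  rw [map_comp_eq_sum_smul_dirac μ (measurable_voronoiIndex _)]
  simp only [measure_voronoiIndex_preimage μ hq]
  rfl

lemma mquantile_mono (μ : Measure ℝ) [IsProbabilityMeasure μ] {a b : ℝ}
    (ha : 0 < a) (hb : b < 1) (hab : a ≤ b) : mquantile μ a ≤ mquantile μ b := by
  have hcdf : mcdf μ = ProbabilityTheory.cdf μ := funext fun t => by
    rw [mcdf, ProbabilityTheory.cdf_eq_real, measureReal_def]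
  have hne : {t | b ≤ mcdf μ t}.Nonempty := by
    rw [hcdf]
    exact ((ProbabilityTheory.tendsto_cdf_atTop μ).eventually (eventually_ge_nhds hb)).exists
  have hbdd : BddBelow {t | a ≤ mcdf μ t} := by
    obtain ⟨t₀, ht₀⟩ := eventually_atBot.1 <|
      (ProbabilityTheory.tendsto_cdf_atBot μ).eventually (eventually_lt_nhds ha)
    exact ⟨t₀, fun t ht => le_of_not_gt fun htt => (ht₀ t htt.le).not_ge (hcdf ▸ ht)⟩
  exact csInf_le_csInf hbdd hne fun t ht => hab.trans ht

section Wasserstein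

variable {α β : Measure ℝ}

lemma W1_le_integral {π : Measure (ℝ × ℝ)} [IsProbabilityMeasure π]
    (h1 : π.map Prod.fst = α) (h2 : π.map Prod.snd = β) :
    W1 α β ≤ ∫ p, |p.1 - p.2| ∂π :=
  csInf_le ⟨0, by rintro _ ⟨π, -, -, -, rfl⟩; exact integral_nonneg fun _ => abs_nonneg _⟩
    ⟨π, ‹_›, h1, h2, rfl⟩

lemma le_W1 [IsProbabilityMeasure α] [IsProbabilityMeasure β] {c : ℝ}
    (h : ∀ π : Measure (ℝ × ℝ), IsProbabilityMeasure π → π.map Prod.fst = α →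
      π.map Prod.snd = β → c ≤ ∫ p, |p.1 - p.2| ∂π) :
    c ≤ W1 α β :=
  le_csInf ⟨_, α.prod β, inferInstance, by simp, by simp, rfl⟩
    (by rintro _ ⟨π, hπ, h1, h2, rfl⟩; exact h π hπ h1 h2)

lemma W1_map_le [IsProbabilityMeasure α] {T : ℝ → ℝ} (hT : Measurable T) :
    W1 α (α.map T) ≤ ∫ x, |x - T x| ∂α := by
  have hφ : Measurable fun x => (x, T x) := measurable_id.prodMk hT
  have := Measure.isProbabilityMeasure_map (μ := α) hφ.aemeasurable
  calc W1 α (α.map T) ≤ ∫ p, |p.1 - p.2| ∂(α.map fun x => (x, T x)) :=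
        W1_le_integral (by rw [Measure.map_map measurable_fst hφ]; exact Measure.map_id)
          (by rw [Measure.map_map measurable_snd hφ]; rfl)
    _ = ∫ x, |x - T x| ∂α := integral_map hφ.aemeasurable (by fun_prop)

lemma integrable_abs_sub_of_map {π : Measure (ℝ × ℝ)} (h1 : π.map Prod.fst = α)
    (h2 : π.map Prod.snd = β) (hα : Integrable (fun x => |x|) α)
    (hβ : Integrable (fun y => |y|) β) :
    Integrable (fun p : ℝ × ℝ => |p.1 - p.2|) π := by
  have hα' := (h1 ▸ hα).comp_measurable measurable_fst
  have hβ' := (h2 ▸ hβ).comp_measurable measurable_snd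
  exact (hα'.add hβ').mono' (by fun_prop) (ae_of_all _ fun p => by simpa using abs_sub p.1 p.2)

lemma integrable_abs_of_measure_compl_eq_zero [IsFiniteMeasure β] {A : Set ℝ}
    (hA : Bornology.IsBounded A) (hβA : β Aᶜ = 0) : Integrable (fun y => |y|) β := by
  obtain ⟨C, hC⟩ := hA.exists_norm_le
  exact Integrable.of_bound (by fun_prop) C
    ((ae_iff.2 hβA).mono fun y hy => by simpa using hC y hy)

lemma integral_infDist_le_W1 [IsProbabilityMeasure α] [IsProbabilityMeasure β] {A : Set ℝ}
    (hA : Bornology.IsBounded A) (hβA : β Aᶜ = 0) (hα : Integrable (fun x => |x|) α) :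
    ∫ x, infDist x A ∂α ≤ W1 α β := by
  refine le_W1 fun π _ h1 h2 => ?_
  have hdist : Integrable (fun x => infDist x A) α :=
    (hα.add (integrable_const (infDist 0 A))).mono'
      (continuous_infDist_pt A).aestronglyMeasurable (ae_of_all _ fun x => by
        simpa [abs_of_nonneg infDist_nonneg, add_comm] using
          infDist_le_infDist_add_dist (s := A) (x := x) (y := 0))
  have hsnd : ∀ᵐ p ∂π, p.2 ∈ A :=
    ae_of_ae_map measurable_snd.aemeasurable (h2 ▸ ae_iff.2 hβA)
  rw [← h1,
    integral_map measurable_fst.aemeasurable (continuous_infDist_pt A).aestronglyMeasurable]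
  exact integral_mono_ae ((h1 ▸ hdist).comp_measurable measurable_fst)
    (integrable_abs_sub_of_map h1 h2 hα (integrable_abs_of_measure_compl_eq_zero hA hβA))
    (hsnd.mono fun p hp => (infDist_le_dist_of_mem hp).trans_eq (Real.dist_eq _ _))

end Wasserstein

/-- `W₁(μ, ν_{Q_v})` equals the integral of the distance to the nearest quantile,
so `ν_{Q_v}` minimizes `λ ↦ W₁(μ, λ)` among probability measures supported on the quantiles. -/
theorem stmt5 (μ : Measure ℝ) (hμ : BasicAssumptions μ)
    (hint : Integrable (fun x : ℝ => |x|) μ) {k : ℕ} (hk : 1 ≤ k)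
    (v : Fin k → ℝ) (hv : Monotone v) (hv01 : ∀ j, v j ∈ Set.Ioo (0 : ℝ) 1) :
    W1 μ (nuQ μ v) = ∫ x, ⨅ j : Fin k, |x - mquantile μ (v j)| ∂μ ∧
    ∀ lam : Measure ℝ, IsProbabilityMeasure lam →
      lam ((Set.range fun j : Fin k => mquantile μ (v j))ᶜ) = 0 →
      W1 μ (nuQ μ v) ≤ W1 μ lam := by
  have := hμ.1
  obtain ⟨n, rfl⟩ : ∃ n, k = n + 1 := ⟨k - 1, by omega⟩
  set q : Fin (n + 1) → ℝ := fun j => mquantile μ (v j)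
  have hq : Monotone q := fun i j hij => mquantile_mono μ (hv01 i).1 (hv01 j).2 (hv hij)
  have hA : Bornology.IsBounded (range q) := (finite_range q).isBounded
  have hT : Measurable (q ∘ voronoiIndex q) :=
    (measurable_of_countable q).comp (measurable_voronoiIndex q)
  have := Measure.isProbabilityMeasure_map (μ := μ) hT.aemeasurable
  have hW : W1 μ (nuQ μ v) = ∫ x, infDist x (range q) ∂μ := by
    rw [nuQ_eq_map μ v hq]
    refine le_antisymm ((W1_map_le hT).trans_eq ?_) (integral_infDist_le_W1 hA ?_ hint)
    · exact integral_congr_ae (ae_of_all _ (abs_sub_voronoiIndex_eq_infDist hq))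
    · rw [Measure.map_apply hT (finite_range q).measurableSet.compl]
      exact measure_mono_null (fun x hx => hx (mem_range_self _)) measure_empty
  refine ⟨hW.trans (integral_congr_ae (ae_of_all _ fun x => ?_)), fun lam _ hlam => ?_⟩
  · show infDist x (range q) = ⨅ j, |x - q j|
    rw [infDist_eq_iInf, iInf_range' (fun y => dist x y) q]
    simp only [Real.dist_eq]
  · exact hW ▸ integral_infDist_le_W1 hA hlam hint
end

section
/- Let μ be a Borel probability measure on ℝ satisfying the basic assumptions and with finite first moment, let k ≥ 2, and suppose ν* with support {y_1 < y_2 < … < y_k} attains inf_{ν ∈ 𝒫_k(ℝ)} W₁(μ,ν). Then, writing F := F_μ, the support points satisfy the system of k equations: 2·F(y_1) = F((y_1+y_2)/2); for every 2 ≤ j ≤ k−1, 2·(F(y_j) − F((y_{j−1}+y_j)/2)) = F((y_j+y_{j+1})/2) − F((y_{j−1}+y_j)/2); and 2·(F(y_k) − F((y_{k−1}+y_k)/2)) = 1 − F((y_{k−1}+y_k)/2). (Each equation says that y_j is a median of μ restricted to the Voronoi cell of y_j in {y_1,…,y_k}.) -/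
open MeasureTheory Filter Topology ENNReal

set_option linter.unusedSectionVars false
set_option linter.unusedVariables false

noncomputable def gdist {k : ℕ} (w : Fin k → ℝ) (x : ℝ) : ℝ := ⨅ i, |x - w i|

section gdist
variable {k : ℕ} [NeZero k] (w : Fin k → ℝ) (x : ℝ)

lemma gdist_exists : ∃ i, gdist w x = |x - w i| ∧ ∀ j, |x - w i| ≤ |x - w j| := by
  obtain ⟨i, hi⟩ := Finite.exists_min (fun i => |x - w i|)
  exact ⟨i, le_antisymm (ciInf_le (Set.Finite.bddBelow (Set.finite_range _)) i)
    (le_ciInf hi), hi⟩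

lemma gdist_le (i : Fin k) : gdist w x ≤ |x - w i| :=
  ciInf_le (Set.Finite.bddBelow (Set.finite_range _)) i

lemma le_gdist {c : ℝ} (h : ∀ i, c ≤ |x - w i|) : c ≤ gdist w x := le_ciInf h

lemma gdist_nonneg : 0 ≤ gdist w x := le_gdist w x (fun i => abs_nonneg _)

lemma gdist_le_gdist_add {w' : Fin k → ℝ} {x' c : ℝ} (h : ∀ i, |x - w i| ≤ |x' - w' i| + c) :
    gdist w x ≤ c + gdist w' x' := by
  obtain ⟨i, hi, -⟩ := gdist_exists w' x'
  exact (gdist_le w x i).trans (((h i).trans_eq (by rw [hi])).trans_eq (add_comm _ _))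

lemma lipschitz_gdist : LipschitzWith 1 (gdist w) := by
  refine LipschitzWith.of_dist_le_mul fun a b => ?_
  rw [Real.dist_eq, Real.dist_eq, NNReal.coe_one, one_mul, abs_sub_le_iff]
  constructor
  · refine sub_le_iff_le_add.mpr (gdist_le_gdist_add w a (x' := b) fun i => ?_)
    have := abs_sub_le a b (w i)
    linarith
  · refine sub_le_iff_le_add.mpr (gdist_le_gdist_add w b (x' := a) fun i => ?_)
    have := abs_sub_le b a (w i)
    have := abs_sub_comm b a
    linarith

lemma continuous_gdist : Continuous (gdist w) := (lipschitz_gdist w).continuous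

lemma lipschitzOn_gdist_update (j : Fin k) (x : ℝ) (s : Set ℝ) :
    LipschitzOnWith 1 (fun t => gdist (Function.update w j t) x) s := by
  intro a _ b _
  simp only [edist_dist, Real.dist_eq]
  rw [ENNReal.coe_one, one_mul, ENNReal.ofReal_le_ofReal_iff (abs_nonneg _), abs_sub_le_iff]
  constructor
  · refine sub_le_iff_le_add.mpr (gdist_le_gdist_add _ x fun i => ?_)
    rcases eq_or_ne i j with rfl | hij
    · simp only [Function.update_self]
      have := abs_sub_le x b a
      have := abs_sub_comm b a
      linarith
    · simp [Function.update_of_ne hij, abs_nonneg]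
  · refine sub_le_iff_le_add.mpr (gdist_le_gdist_add _ x fun i => ?_)
    rcases eq_or_ne i j with rfl | hij
    · simp only [Function.update_self]
      have := abs_sub_le x a b
      linarith
    · simp [Function.update_of_ne hij, abs_nonneg]

end gdist


lemma W1_set_nonneg (α β : Measure ℝ) : ∀ c ∈ {c : ℝ | ∃ π : Measure (ℝ × ℝ), IsProbabilityMeasure π ∧
    π.map Prod.fst = α ∧ π.map Prod.snd = β ∧ c = ∫ p, |p.1 - p.2| ∂π}, 0 ≤ c := by
  rintro c ⟨π, hπ, h1, h2, rfl⟩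
  exact integral_nonneg fun p => abs_nonneg _

lemma W1_le_cost {α β : Measure ℝ} (π : Measure (ℝ × ℝ)) (hπ : IsProbabilityMeasure π)
    (h1 : π.map Prod.fst = α) (h2 : π.map Prod.snd = β) :
    W1 α β ≤ ∫ p, |p.1 - p.2| ∂π :=
  csInf_le ⟨0, W1_set_nonneg α β⟩ ⟨π, hπ, h1, h2, rfl⟩


lemma integrable_gdist {k : ℕ} [NeZero k] (w : Fin k → ℝ) (μ : Measure ℝ)
    [IsProbabilityMeasure μ] (hint : Integrable (fun x : ℝ => |x|) μ) :
    Integrable (gdist w) μ := by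
  have i0 : Fin k := Classical.arbitrary _
  refine Integrable.mono' (g := fun x => |x| + |w i0|)
    (hint.add (integrable_const _)) (continuous_gdist w).aestronglyMeasurable ?_
  refine Eventually.of_forall fun x => ?_
  rw [Real.norm_eq_abs, abs_of_nonneg (gdist_nonneg w x)]
  calc gdist w x ≤ |x - w i0| := gdist_le w x i0
    _ ≤ |x| + |w i0| := abs_sub _ _

lemma integrable_comp_fst {f : ℝ → ℝ} {π : Measure (ℝ × ℝ)} {α : Measure ℝ}
    (h1 : π.map Prod.fst = α) (hf : AEStronglyMeasurable f α) (hi : Integrable f α) :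
    Integrable (fun p : ℝ × ℝ => f p.1) π := by
  have := (integrable_map_measure (f := Prod.fst) (g := f)
    (by rwa [h1]) measurable_fst.aemeasurable).mp (by rwa [h1])
  exact this

lemma integrable_comp_snd {f : ℝ → ℝ} {π : Measure (ℝ × ℝ)} {β : Measure ℝ}
    (h2 : π.map Prod.snd = β) (hf : AEStronglyMeasurable f β) (hi : Integrable f β) :
    Integrable (fun p : ℝ × ℝ => f p.2) π := by
  have := (integrable_map_measure (f := Prod.snd) (g := f)
    (by rwa [h2]) measurable_snd.aemeasurable).mp (by rwa [h2])
  exact this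

lemma W1_ge {k : ℕ} [NeZero k] (μ ν : Measure ℝ) [IsProbabilityMeasure μ]
    [IsProbabilityMeasure ν] (hμint : Integrable (fun x : ℝ => |x|) μ)
    (hνint : Integrable (fun x : ℝ => |x|) ν) (y : Fin k → ℝ)
    (hν0 : ν ((Set.range y)ᶜ) = 0) :
    ∫ x, gdist y x ∂μ ≤ W1 μ ν := by
  refine le_csInf ⟨∫ p : ℝ × ℝ, |p.1 - p.2| ∂(μ.prod ν), μ.prod ν, inferInstance,
    by rw [← Measure.fst]; exact Measure.fst_prod, by rw [← Measure.snd]; exact Measure.snd_prod, rfl⟩ ?_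
  rintro c ⟨π, hπ, h1, h2, rfl⟩
  haveI := hπ
  -- integrability
  have hint1 : Integrable (fun p : ℝ × ℝ => |p.1|) π :=
    integrable_comp_fst h1 hμint.aestronglyMeasurable hμint
  have hint2 : Integrable (fun p : ℝ × ℝ => |p.2|) π :=
    integrable_comp_snd h2 hνint.aestronglyMeasurable hνint
  have hintc : Integrable (fun p : ℝ × ℝ => |p.1 - p.2|) π := by
    refine Integrable.mono' (hint1.add hint2)
      (Continuous.aestronglyMeasurable (by fun_prop)) ?_
    refine Eventually.of_forall fun p => ?_
    rw [Real.norm_eq_abs, abs_abs]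
    exact abs_sub _ _
  have hintg : Integrable (fun p : ℝ × ℝ => gdist y p.1) π :=
    integrable_comp_fst h1 (continuous_gdist y).aestronglyMeasurable
      (integrable_gdist y μ hμint)
  -- a.e. bound
  have hae : ∀ᵐ p : ℝ × ℝ ∂π, p.2 ∈ Set.range y := by
    rw [ae_iff]
    have : {p : ℝ × ℝ | ¬ p.2 ∈ Set.range y} = Prod.snd ⁻¹' (Set.range y)ᶜ := rfl
    rw [this, ← Measure.map_apply measurable_snd
      (Set.Finite.measurableSet (Set.finite_range y)).compl, h2]
    exact hν0
  have hle : (fun p : ℝ × ℝ => gdist y p.1) ≤ᶠ[ae π] fun p => |p.1 - p.2| := by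
    filter_upwards [hae] with p hp
    obtain ⟨i, hi⟩ := hp
    calc gdist y p.1 ≤ |p.1 - y i| := gdist_le y p.1 i
      _ = |p.1 - p.2| := by rw [hi]
  calc ∫ x, gdist y x ∂μ = ∫ p : ℝ × ℝ, gdist y p.1 ∂π := by
        rw [← h1, integral_map measurable_fst.aemeasurable
          ((continuous_gdist y).aestronglyMeasurable)]
    _ ≤ ∫ p : ℝ × ℝ, |p.1 - p.2| ∂π := integral_mono_ae hintg hintc hle


variable {k : ℕ}

noncomputable def cellL (w : Fin k → ℝ) (j : Fin k) : EReal :=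
  if _h : (j : ℕ) = 0 then ⊥ else
    ((w ⟨(j:ℕ) - 1, by have := j.isLt; omega⟩ + w j) / 2 : ℝ)

noncomputable def cellU (w : Fin k → ℝ) (j : Fin k) : EReal :=
  if _h : (j : ℕ) = k - 1 then ⊤ else
    ((w j + w ⟨(j:ℕ) + 1, by have := j.isLt; omega⟩) / 2 : ℝ)

def cell (w : Fin k → ℝ) (j : Fin k) : Set ℝ :=
  {x : ℝ | cellL w j < (x : EReal) ∧ (x : EReal) ≤ cellU w j}

lemma cellU_pred_eq_cellL (w : Fin k → ℝ) (j : Fin k) (h0 : (j : ℕ) ≠ 0) :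
    cellU w ⟨(j:ℕ) - 1, by have := j.isLt; omega⟩ = cellL w j := by
  have hj := j.isLt
  rw [cellU, cellL, dif_neg (by simp; omega), dif_neg h0]
  norm_num
  have he : (⟨(j:ℕ) - 1 + 1, by omega⟩ : Fin k) = j := Fin.ext (by simp; omega)
  rw [he]

lemma cellU_le_cellL (w : Fin k → ℝ) (hw : StrictMono w) {i j : Fin k}
    (hij : (i : ℕ) < (j : ℕ)) : cellU w i ≤ cellL w j := by
  have hi := i.isLt; have hj := j.isLt
  rw [cellU, cellL, dif_neg (by omega), dif_neg (by omega)]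
  rw [EReal.coe_le_coe_iff]
  have h1 : w i ≤ w ⟨(j:ℕ) - 1, by omega⟩ := hw.monotone (by simp only [Fin.le_def, Fin.val_mk]; omega)
  have h2 : w ⟨(i:ℕ) + 1, by omega⟩ ≤ w j := hw.monotone (by simp only [Fin.le_def, Fin.val_mk]; omega)
  linarith

lemma cell_disjoint (w : Fin k → ℝ) (hw : StrictMono w) :
    Pairwise (Function.onFun Disjoint (cell w)) := by
  intro i j hij
  rw [Function.onFun, Set.disjoint_left]
  rintro x ⟨hL1, hU1⟩ ⟨hL2, hU2⟩
  rcases lt_or_gt_of_ne hij with h | h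
  · exact absurd ((hU1.trans (cellU_le_cellL w hw (Fin.lt_def.mp h))).trans_lt hL2) (lt_irrefl _)
  · exact absurd ((hU2.trans (cellU_le_cellL w hw (Fin.lt_def.mp h))).trans_lt hL1) (lt_irrefl _)

lemma cell_cover [NeZero k] (w : Fin k → ℝ) : ⋃ j, cell w j = Set.univ := by
  have hk : 0 < k := Nat.pos_of_ne_zero (NeZero.ne k)
  ext x
  simp only [Set.mem_iUnion, Set.mem_univ, iff_true]
  classical
  set s : Finset (Fin k) := Finset.univ.filter (fun j => (x:EReal) ≤ cellU w j) with hs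
  have hlast : (⟨k - 1, by omega⟩ : Fin k) ∈ s := by
    simp only [hs, Finset.mem_filter, Finset.mem_univ, true_and]
    rw [cellU, dif_pos rfl]
    exact le_top
  have hne : s.Nonempty := ⟨_, hlast⟩
  refine ⟨s.min' hne, ?_, (Finset.mem_filter.mp (s.min'_mem hne)).2⟩
  set j₀ := s.min' hne
  by_cases h0 : (j₀ : ℕ) = 0
  · rw [cellL, dif_pos h0]; exact EReal.bot_lt_coe x
  · set i : Fin k := ⟨(j₀:ℕ) - 1, by have := j₀.isLt; omega⟩ with hi
    have hnotmem : i ∉ s := by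
      intro hmem
      have := s.min'_le i hmem
      rw [Fin.le_def] at this
      simp only [hi] at this
      omega
    have : ¬ ((x:EReal) ≤ cellU w i) := by
      intro hle
      exact hnotmem (by simp [hs, hle])
    rw [cellU_pred_eq_cellL w j₀ h0] at this
    exact lt_of_not_ge this

lemma measurableSet_cell (w : Fin k → ℝ) (j : Fin k) : MeasurableSet (cell w j) := by
  have : cell w j = (fun x : ℝ => (x : EReal)) ⁻¹' (Set.Ioc (cellL w j) (cellU w j)) := rfl
  rw [this]
  exact (measurable_coe_real_ereal) measurableSet_Ioc

lemma cell_opt (w : Fin k → ℝ) (hw : StrictMono w) {j : Fin k} {x : ℝ}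
    (hx : x ∈ cell w j) (i : Fin k) : |x - w j| ≤ |x - w i| := by
  obtain ⟨hL, hU⟩ := hx
  have hi := i.isLt; have hj := j.isLt
  rcases lt_trichotomy (i : ℕ) (j : ℕ) with h | h | h
  · -- i < j, use lower bound: mid(j-1,j) < x
    rw [cellL, dif_neg (by omega)] at hL
    rw [show ((w ⟨(j:ℕ)-1, by omega⟩ + w j) / 2 : ℝ) < (x:EReal) ↔
      (w ⟨(j:ℕ)-1, by omega⟩ + w j) / 2 < x from EReal.coe_lt_coe_iff] at hL
    have h1 : w i ≤ w ⟨(j:ℕ)-1, by omega⟩ := hw.monotone (by simp only [Fin.le_def, Fin.val_mk]; omega)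
    have h2 : w ⟨(j:ℕ)-1, by omega⟩ < w j := hw (by simp only [Fin.lt_def, Fin.val_mk]; omega)
    rcases abs_cases (x - w j) with ⟨e1, _⟩ | ⟨e1, _⟩ <;>
      rcases abs_cases (x - w i) with ⟨e2, _⟩ | ⟨e2, _⟩ <;> rw [e1, e2] <;> try linarith
  · have : i = j := Fin.ext h
    rw [this]
  · -- j < i, use upper bound x ≤ mid(j, j+1)
    rw [cellU, dif_neg (by omega)] at hU
    rw [show (x:EReal) ≤ ((w j + w ⟨(j:ℕ)+1, by omega⟩) / 2 : ℝ) ↔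
      x ≤ (w j + w ⟨(j:ℕ)+1, by omega⟩) / 2 from EReal.coe_le_coe_iff] at hU
    have h1 : w ⟨(j:ℕ)+1, by omega⟩ ≤ w i := hw.monotone (by simp only [Fin.le_def, Fin.val_mk]; omega)
    have h2 : w j < w ⟨(j:ℕ)+1, by omega⟩ := hw (by simp only [Fin.lt_def, Fin.val_mk]; omega)
    rcases abs_cases (x - w j) with ⟨e1, _⟩ | ⟨e1, _⟩ <;>
      rcases abs_cases (x - w i) with ⟨e2, _⟩ | ⟨e2, _⟩ <;> rw [e1, e2] <;> try linarith


-- THE ACTUAL NEW CONTENT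
lemma projDist_le {k : ℕ} [NeZero k] (μ : Measure ℝ) [IsProbabilityMeasure μ]
    (hint : Integrable (fun x : ℝ => |x|) μ) (w : Fin k → ℝ) (hw : StrictMono w) :
    projDist k μ ≤ ∫ x, gdist w x ∂μ := by
  classical
  set π : Measure (ℝ × ℝ) :=
    Measure.sum (fun j : Fin k => (μ.restrict (cell w j)).map (fun x => (x, w j))) with hπdef
  set ν : Measure ℝ := Measure.sum (fun j : Fin k => μ (cell w j) • Measure.dirac (w j)) with hνdef
  have hrsum : Measure.sum (fun j : Fin k => μ.restrict (cell w j)) = μ := by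
    rw [← Measure.restrict_iUnion (cell_disjoint w hw) (measurableSet_cell w), cell_cover,
      Measure.restrict_univ]
  have hmeasj : ∀ j : Fin k, Measurable (fun x : ℝ => (x, w j)) :=
    fun j => measurable_id.prodMk measurable_const
  have hfst : π.map Prod.fst = μ := by
    rw [hπdef, Measure.map_sum measurable_fst.aemeasurable]
    have : ∀ j : Fin k, ((μ.restrict (cell w j)).map (fun x => (x, w j))).map Prod.fst
        = μ.restrict (cell w j) := by
      intro j
      rw [Measure.map_map measurable_fst (hmeasj j)]
      have : (Prod.fst ∘ fun x : ℝ => (x, w j)) = id := rfl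
      rw [this, Measure.map_id]
    simp_rw [this]
    exact hrsum
  have hsnd : π.map Prod.snd = ν := by
    rw [hπdef, Measure.map_sum measurable_snd.aemeasurable, hνdef]
    congr 1
    funext j
    rw [Measure.map_map measurable_snd (hmeasj j)]
    have : (Prod.snd ∘ fun x : ℝ => (x, w j)) = fun _ => w j := rfl
    rw [this, Measure.map_const, Measure.restrict_apply_univ]
  have hπprob : IsProbabilityMeasure π := by
    constructor
    have := congrArg (fun m : Measure ℝ => m Set.univ) hfst
    simp only [Measure.map_apply measurable_fst MeasurableSet.univ, Set.preimage_univ] at this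
    rw [this]
    exact measure_univ
  have hνprob : IsProbabilityMeasure ν := by
    constructor
    have := congrArg (fun m : Measure ℝ => m Set.univ) hsnd
    simp only [Measure.map_apply measurable_snd MeasurableSet.univ, Set.preimage_univ] at this
    rw [← this]
    exact measure_univ
  -- ν ∈ Pk k
  set s : Finset ℝ := Finset.image w Finset.univ with hsdef
  have hνs : ν ((↑s : Set ℝ)ᶜ) = 0 := by
    rw [hνdef, Measure.sum_apply _ (s.measurableSet.compl)]
    refine ENNReal.tsum_eq_zero.mpr fun j => ?_
    rw [Measure.smul_apply, Measure.dirac_apply' _ (s.measurableSet.compl)]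
    have : w j ∉ (↑s : Set ℝ)ᶜ := by
      simp [hsdef]
    rw [Set.indicator_of_notMem this]
    simp
  have hPk : ν ∈ Pk k := ⟨hνprob, s, (Finset.card_image_le).trans (by simp), hνs⟩
  -- integrability of |x| wrt ν
  have hsne : s.Nonempty := ⟨w ⟨0, Nat.pos_of_ne_zero (NeZero.ne k)⟩, by simp [hsdef]⟩
  have hνae : ∀ᵐ x ∂ν, x ∈ (↑s : Set ℝ) := by
    rw [ae_iff]
    exact hνs
  have hνint : Integrable (fun x : ℝ => |x|) ν := by
    refine Integrable.mono' (g := fun _ => s.sup' hsne (fun a => |a|))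
      (integrable_const _) continuous_abs.aestronglyMeasurable ?_
    filter_upwards [hνae] with x hx
    rw [Real.norm_eq_abs, abs_abs]
    exact Finset.le_sup' (fun a => |a|) hx
  -- cost integrability
  have hcostint : Integrable (fun p : ℝ × ℝ => |p.1 - p.2|) π := by
    refine Integrable.mono'
      ((integrable_comp_fst hfst hint.aestronglyMeasurable hint).add
        (integrable_comp_snd hsnd hνint.aestronglyMeasurable hνint))
      (Continuous.aestronglyMeasurable (by fun_prop)) ?_
    refine Eventually.of_forall fun p => ?_
    rw [Real.norm_eq_abs, abs_abs]
    exact abs_sub _ _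
  -- cost computation
  have hcost : ∫ p : ℝ × ℝ, |p.1 - p.2| ∂π = ∫ x, gdist w x ∂μ := by
    rw [hπdef, integral_sum_measure (by rw [← hπdef]; exact hcostint)]
    have hterm : ∀ j : Fin k, ∫ p : ℝ × ℝ, |p.1 - p.2| ∂((μ.restrict (cell w j)).map
        (fun x => (x, w j))) = ∫ x in cell w j, gdist w x ∂μ := by
      intro j
      rw [integral_map (hmeasj j).aemeasurable (Continuous.aestronglyMeasurable (by fun_prop))]
      refine setIntegral_congr_fun (measurableSet_cell w j) fun x hx => ?_
      exact le_antisymm (le_gdist w x (cell_opt w hw hx)) (gdist_le w x j)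
    simp_rw [hterm]
    rw [← integral_iUnion (measurableSet_cell w) (cell_disjoint w hw)
      ((integrable_gdist w μ hint).integrableOn), cell_cover, setIntegral_univ]
  -- conclude
  have h1 : projDist k μ ≤ W1 μ ν := by
    refine csInf_le ⟨0, ?_⟩ ⟨ν, hPk, rfl⟩
    rintro c ⟨ν', hν', rfl⟩
    exact Real.sInf_nonneg (W1_set_nonneg μ ν')
  calc projDist k μ ≤ W1 μ ν := h1
    _ ≤ ∫ p : ℝ × ℝ, |p.1 - p.2| ∂π := W1_le_cost π hπprob hfst hsnd
    _ = ∫ x, gdist w x ∂μ := hcost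


section NEW
variable {k : ℕ} [NeZero k]

lemma cellL_lt_self (w : Fin k → ℝ) (hw : StrictMono w) (j : Fin k) :
    cellL w j < (w j : EReal) := by
  rw [cellL]
  split_ifs with h
  · exact EReal.bot_lt_coe _
  · rw [EReal.coe_lt_coe_iff]
    have := hw (show (⟨(j:ℕ)-1, by have := j.isLt; omega⟩ : Fin k) < j by
      simp only [Fin.lt_def, Fin.val_mk]; omega)
    linarith

lemma self_lt_cellU (w : Fin k → ℝ) (hw : StrictMono w) (j : Fin k) :
    (w j : EReal) < cellU w j := by
  rw [cellU]
  split_ifs with h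
  · exact EReal.coe_lt_top _
  · rw [EReal.coe_lt_coe_iff]
    have := hw (show j < (⟨(j:ℕ)+1, by have := j.isLt; omega⟩ : Fin k) by
      simp only [Fin.lt_def, Fin.val_mk]; omega)
    linarith

lemma strictMono_update (y : Fin k → ℝ) (hy : StrictMono y) (j : Fin k) (t : ℝ)
    (h : ∀ i : Fin k, (i < j → y i < t) ∧ (j < i → t < y i)) :
    StrictMono (Function.update y j t) := by
  intro a b hab
  rcases eq_or_ne a j with rfl | ha
  · rw [Function.update_self, Function.update_of_ne (ne_of_gt hab)]
    exact (h b).2 hab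
  · rw [Function.update_of_ne ha]
    rcases eq_or_ne b j with rfl | hb
    · rw [Function.update_self]
      exact (h a).1 hab
    · rw [Function.update_of_ne hb]
      exact hy hab

lemma eventually_strictMono_update (y : Fin k → ℝ) (hy : StrictMono y) (j : Fin k) :
    ∀ᶠ t in 𝓝 (y j), StrictMono (Function.update y j t) := by
  have : ∀ᶠ t in 𝓝 (y j), ∀ i : Fin k, (i < j → y i < t) ∧ (j < i → t < y i) := by
    rw [eventually_all]
    intro i
    rcases lt_trichotomy i j with h | h | h
    · filter_upwards [lt_mem_nhds (hy h)] with t ht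
      exact ⟨fun _ => ht, fun hc => absurd (h.trans hc) (lt_irrefl _)⟩
    · subst h
      exact Eventually.of_forall fun t => ⟨fun hc => absurd hc (lt_irrefl _),
        fun hc => absurd hc (lt_irrefl _)⟩
    · filter_upwards [gt_mem_nhds (hy h)] with t ht
      exact ⟨fun hc => absurd (hc.trans h) (lt_irrefl _), fun _ => ht⟩
  filter_upwards [this] with t ht
  exact strictMono_update y hy j t ht

lemma measurableSet_AB (c : EReal) (a : ℝ) :
    MeasurableSet {x : ℝ | c < (x : EReal) ∧ x < a} ∧
    MeasurableSet {x : ℝ | a < x ∧ (x : EReal) < c} := by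
  constructor
  · exact (measurable_coe_real_ereal measurableSet_Ioi).inter measurableSet_Iio
  · exact measurableSet_Ioi.inter (measurable_coe_real_ereal measurableSet_Iio)

theorem cell_median (μ : Measure ℝ) [IsProbabilityMeasure μ] [NullSingletonClass μ]
    (hint : Integrable (fun x : ℝ => |x|) μ) (y : Fin k → ℝ) (hy : StrictMono y) (j : Fin k)
    (hmin : ∀ t : ℝ, StrictMono (Function.update y j t) →
      (∫ x, gdist y x ∂μ) ≤ ∫ x, gdist (Function.update y j t) x ∂μ) :
    (μ {x : ℝ | cellL y j < (x:EReal) ∧ x < y j}).toReal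
      = (μ {x : ℝ | y j < x ∧ (x:EReal) < cellU y j}).toReal := by
  classical
  set A : Set ℝ := {x : ℝ | cellL y j < (x:EReal) ∧ x < y j} with hA
  set B : Set ℝ := {x : ℝ | y j < x ∧ (x:EReal) < cellU y j} with hB
  have hAm : MeasurableSet A := (measurableSet_AB (cellL y j) (y j)).1
  have hBm : MeasurableSet B := (measurableSet_AB (cellU y j) (y j)).2
  set F' : ℝ → ℝ := fun x => A.indicator (fun _ => (1:ℝ)) x - B.indicator (fun _ => (1:ℝ)) x
    with hF'
  -- the null set of bad points
  have hbadL : μ {x : ℝ | (x : EReal) = cellL y j} = 0 := by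
    refine Set.Subsingleton.measure_zero (fun a ha b hb => ?_) μ
    simp only [Set.mem_setOf_eq] at ha hb
    exact_mod_cast ha.trans hb.symm
  have hbadU : μ {x : ℝ | (x : EReal) = cellU y j} = 0 := by
    refine Set.Subsingleton.measure_zero (fun a ha b hb => ?_) μ
    simp only [Set.mem_setOf_eq] at ha hb
    exact_mod_cast ha.trans hb.symm
  have hae : ∀ᵐ (x : ℝ) ∂μ, (x : EReal) ≠ cellL y j ∧ (x : EReal) ≠ cellU y j ∧ x ≠ y j := by
    have h1 : ∀ᵐ (x : ℝ) ∂μ, (x : EReal) ≠ cellL y j := by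
      rw [ae_iff]
      simpa only [ne_eq, not_not] using hbadL
    have h2 : ∀ᵐ (x : ℝ) ∂μ, (x : EReal) ≠ cellU y j := by
      rw [ae_iff]
      simpa only [ne_eq, not_not] using hbadU
    have h3 : ∀ᵐ (x : ℝ) ∂μ, x ≠ y j := by
      rw [ae_iff]
      simpa only [ne_eq, not_not, Set.setOf_eq_eq_singleton] using measure_singleton (y j)
    exact h1.and (h2.and h3)
  -- pointwise derivatives a.e.
  have hF'meas : AEStronglyMeasurable F' μ :=
    ((measurable_const.indicator hAm).sub (measurable_const.indicator hBm)).aestronglyMeasurable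
  have hdiff : ∀ᵐ (x : ℝ) ∂μ, HasDerivAt (fun t => gdist (Function.update y j t) x) (F' x) (y j) := by
    filter_upwards [hae] with x hx
    obtain ⟨hxL, hxU, hxj⟩ := hx
    have habs : Continuous fun t : ℝ => |x - t| := (continuous_const.sub continuous_id).abs
    by_cases hL : (x : EReal) < cellL y j
    · -- Case 3 left : x strictly left of the cell
      have hxmem : x ∈ ⋃ j', cell y j' := by rw [cell_cover]; trivial
      obtain ⟨j', hxj'⟩ := Set.mem_iUnion.mp hxmem
      have hne : j' ≠ j := by
        rintro rfl
        exact absurd hL (not_lt.mpr hxj'.1.le)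
      have h0 : (j : ℕ) ≠ 0 := by
        intro h0
        rw [cellL, dif_pos h0] at hL
        exact absurd hL (not_lt_bot)
      have hLr : x < (y ⟨(j:ℕ)-1, by have := j.isLt; omega⟩ + y j) / 2 := by
        rw [cellL, dif_neg h0, EReal.coe_lt_coe_iff] at hL
        exact hL
      have hjj : y ⟨(j:ℕ)-1, by have := j.isLt; omega⟩ < y j := hy (by
        simp only [Fin.lt_def, Fin.val_mk]; omega)
      have hstrictj : |x - y j'| < |x - y j| := by
        have hle' : |x - y j'| ≤ |x - y ⟨(j:ℕ)-1, by have := j.isLt; omega⟩| :=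
          cell_opt y hy hxj' _
        rcases abs_cases (x - y ⟨(j:ℕ)-1, by have := j.isLt; omega⟩) with ⟨e1, s1⟩ | ⟨e1, s1⟩ <;>
          rcases abs_cases (x - y j) with ⟨e2, s2⟩ | ⟨e2, s2⟩ <;> rw [e1] at hle' <;>
          rw [e2] <;> linarith
      have hxltj : x < y j := EReal.coe_lt_coe_iff.mp (hL.trans (cellL_lt_self y hy j))
      have hxA : x ∉ A := fun hc => absurd hc.1 (not_lt.mpr hL.le)
      have hxB : x ∉ B := fun hc => absurd hc.1 (not_lt.mpr hxltj.le)
      have hFx : F' x = 0 := by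
        simp [hF', Set.indicator_of_notMem hxA, Set.indicator_of_notMem hxB]
      have hev : ∀ᶠ t in 𝓝 (y j), gdist (Function.update y j t) x = |x - y j'| := by
        filter_upwards [Tendsto.eventually_const_lt hstrictj (habs.tendsto (y j))] with t ht
        refine le_antisymm ?_ (le_gdist _ _ fun i => ?_)
        · have := gdist_le (Function.update y j t) x j'
          rwa [Function.update_of_ne hne] at this
        · rcases eq_or_ne i j with rfl | hij
          · rw [Function.update_self]; exact ht.le
          · rw [Function.update_of_ne hij]; exact cell_opt y hy hxj' i
      rw [hFx]
      exact (hasDerivAt_const (y j) (|x - y j'|)).congr_of_eventuallyEq hev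
    · have hL' : cellL y j < (x : EReal) := lt_of_le_of_ne (not_lt.mp hL) (Ne.symm hxL)
      by_cases hU : cellU y j < (x : EReal)
      · -- Case 3 right : x strictly right of the cell
        have hxmem : x ∈ ⋃ j', cell y j' := by rw [cell_cover]; trivial
        obtain ⟨j', hxj'⟩ := Set.mem_iUnion.mp hxmem
        have hne : j' ≠ j := by
          rintro rfl
          exact absurd hU (not_lt.mpr hxj'.2)
        have h0 : (j : ℕ) ≠ k - 1 := by
          intro h0
          rw [cellU, dif_pos h0] at hU
          exact absurd hU (not_top_lt)
        have hUr : (y j + y ⟨(j:ℕ)+1, by have := j.isLt; omega⟩) / 2 < x := by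
          rw [cellU, dif_neg h0, EReal.coe_lt_coe_iff] at hU
          exact hU
        have hjj : y j < y ⟨(j:ℕ)+1, by have := j.isLt; omega⟩ := hy (by
          simp only [Fin.lt_def, Fin.val_mk]; omega)
        have hstrictj : |x - y j'| < |x - y j| := by
          have hle' : |x - y j'| ≤ |x - y ⟨(j:ℕ)+1, by have := j.isLt; omega⟩| :=
          cell_opt y hy hxj' _
          rcases abs_cases (x - y ⟨(j:ℕ)+1, by have := j.isLt; omega⟩) with ⟨e1, s1⟩ | ⟨e1, s1⟩ <;>
            rcases abs_cases (x - y j) with ⟨e2, s2⟩ | ⟨e2, s2⟩ <;> rw [e1] at hle' <;>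
            rw [e2] <;> linarith
        have hxgtj : y j < x := EReal.coe_lt_coe_iff.mp ((self_lt_cellU y hy j).trans hU)
        have hxA : x ∉ A := fun hc => absurd hc.2 (not_lt.mpr hxgtj.le)
        have hxB : x ∉ B := fun hc => absurd hc.2 (not_lt.mpr hU.le)
        have hFx : F' x = 0 := by
          simp [hF', Set.indicator_of_notMem hxA, Set.indicator_of_notMem hxB]
        have hev : ∀ᶠ t in 𝓝 (y j), gdist (Function.update y j t) x = |x - y j'| := by
          filter_upwards [Tendsto.eventually_const_lt hstrictj (habs.tendsto (y j))] with t ht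
          refine le_antisymm ?_ (le_gdist _ _ fun i => ?_)
          · have := gdist_le (Function.update y j t) x j'
            rwa [Function.update_of_ne hne] at this
          · rcases eq_or_ne i j with rfl | hij
            · rw [Function.update_self]; exact ht.le
            · rw [Function.update_of_ne hij]; exact cell_opt y hy hxj' i
        rw [hFx]
        exact (hasDerivAt_const (y j) (|x - y j'|)).congr_of_eventuallyEq hev
      · have hU' : (x : EReal) < cellU y j := lt_of_le_of_ne (not_lt.mp hU) hxU
        -- x is strictly inside the cell, x ≠ y j
        have hstrict : ∀ i : Fin k, i ≠ j → |x - y j| < |x - y i| := by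
          intro i hij
          rcases lt_or_gt_of_ne hij with hlt2 | hgt2
          · have h0 : (j : ℕ) ≠ 0 := by
              have := Fin.lt_def.mp hlt2; omega
            have hLr : (y ⟨(j:ℕ)-1, by have := j.isLt; omega⟩ + y j) / 2 < x := by
              rw [cellL, dif_neg h0, EReal.coe_lt_coe_iff] at hL'
              exact hL'
            have hmono : y i ≤ y ⟨(j:ℕ)-1, by have := j.isLt; omega⟩ := hy.monotone (by
              simp only [Fin.le_def, Fin.val_mk]
              have := Fin.lt_def.mp hlt2; omega)
            have hjj : y ⟨(j:ℕ)-1, by have := j.isLt; omega⟩ < y j := hy (by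
              simp only [Fin.lt_def, Fin.val_mk]; omega)
            rcases abs_cases (x - y j) with ⟨e2, s2⟩ | ⟨e2, s2⟩ <;>
              rcases abs_cases (x - y i) with ⟨e1, s1⟩ | ⟨e1, s1⟩ <;>
              rw [e1, e2] <;> linarith
          · have h0 : (j : ℕ) ≠ k - 1 := by
              have := Fin.lt_def.mp hgt2; have := i.isLt; omega
            have hUr : x < (y j + y ⟨(j:ℕ)+1, by have := j.isLt; omega⟩) / 2 := by
              rw [cellU, dif_neg h0, EReal.coe_lt_coe_iff] at hU'
              exact hU'
            have hmono : y ⟨(j:ℕ)+1, by have := j.isLt; omega⟩ ≤ y i := hy.monotone (by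
              simp only [Fin.le_def, Fin.val_mk]
              have := Fin.lt_def.mp hgt2; omega)
            have hjj : y j < y ⟨(j:ℕ)+1, by have := j.isLt; omega⟩ := hy (by
              simp only [Fin.lt_def, Fin.val_mk]; omega)
            rcases abs_cases (x - y j) with ⟨e2, s2⟩ | ⟨e2, s2⟩ <;>
              rcases abs_cases (x - y i) with ⟨e1, s1⟩ | ⟨e1, s1⟩ <;>
              rw [e1, e2] <;> linarith
        have hevlt : ∀ᶠ t in 𝓝 (y j), ∀ i : Fin k, i ≠ j → |x - t| < |x - y i| := by
          rw [eventually_all]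
          intro i
          rcases eq_or_ne i j with rfl | hij
          · exact Eventually.of_forall fun t hc => absurd rfl hc
          · filter_upwards [Tendsto.eventually_lt_const (hstrict i hij) (habs.tendsto (y j))]
              with t ht
            exact fun _ => ht
        have hgd : ∀ t : ℝ, (∀ i : Fin k, i ≠ j → |x - t| < |x - y i|) →
            gdist (Function.update y j t) x = |x - t| := by
          intro t h1t
          refine le_antisymm ?_ (le_gdist _ _ fun i => ?_)
          · have := gdist_le (Function.update y j t) x j
            rwa [Function.update_self] at this
          · rcases eq_or_ne i j with rfl | hij
            · rw [Function.update_self]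
            · rw [Function.update_of_ne hij]
              exact (h1t i hij).le
        rcases lt_or_gt_of_ne hxj with hlt | hgt
        · -- x ∈ A
          have hxA : x ∈ A := ⟨hL', hlt⟩
          have hxB : x ∉ B := fun hc => absurd hc.1 (not_lt.mpr hlt.le)
          have hFx : F' x = 1 := by
            simp [hF', Set.indicator_of_mem hxA, Set.indicator_of_notMem hxB]
          have hev : ∀ᶠ t in 𝓝 (y j), gdist (Function.update y j t) x = t - x := by
            filter_upwards [hevlt, lt_mem_nhds hlt] with t h1t h2t
            rw [hgd t h1t, abs_of_neg (by linarith : x - t < 0)]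
            ring
          rw [hFx]
          exact ((hasDerivAt_id (y j)).sub_const x).congr_of_eventuallyEq hev
        · -- x ∈ B
          have hxB : x ∈ B := ⟨hgt, hU'⟩
          have hxA : x ∉ A := fun hc => absurd hc.2 (not_lt.mpr hgt.le)
          have hFx : F' x = -1 := by
            simp [hF', Set.indicator_of_mem hxB, Set.indicator_of_notMem hxA]
          have hev : ∀ᶠ t in 𝓝 (y j), gdist (Function.update y j t) x = x - t := by
            filter_upwards [hevlt, gt_mem_nhds hgt] with t h1t h2t
            rw [hgd t h1t, abs_of_pos (by linarith : (0:ℝ) < x - t)]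
          rw [hFx]
          exact ((hasDerivAt_id (y j)).const_sub x).congr_of_eventuallyEq hev
  -- differentiate under the integral sign
  have key := hasDerivAt_integral_of_dominated_loc_of_lip (μ := μ)
    (F := fun t x => gdist (Function.update y j t) x) (F' := F') (x₀ := y j)
    (bound := fun _ => (1:ℝ)) (Metric.ball_mem_nhds (y j) one_pos)
    (Eventually.of_forall fun t => (continuous_gdist _).aestronglyMeasurable)
    (by simpa only [Function.update_eq_self] using integrable_gdist y μ hint)
    hF'meas
    (Eventually.of_forall fun x => by
      simpa using lipschitzOn_gdist_update y j x (Metric.ball (y j) 1))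
    (integrable_const 1)
    hdiff
  obtain ⟨-, hderiv⟩ := key
  have hloc : IsLocalMin (fun t => ∫ x, gdist (Function.update y j t) x ∂μ) (y j) := by
    filter_upwards [eventually_strictMono_update y hy j] with t ht
    have := hmin t ht
    simpa [Function.update_eq_self] using this
  have hzero := hloc.hasDerivAt_eq_zero hderiv
  have hintF' : ∫ x, F' x ∂μ = (μ A).toReal - (μ B).toReal := by
    rw [hF', integral_sub ((integrable_const (1:ℝ)).indicator hAm)
      ((integrable_const (1:ℝ)).indicator hBm), integral_indicator hAm, integral_indicator hBm,
      setIntegral_const, setIntegral_const]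
    simp
    rfl
  rw [hintF'] at hzero
  linarith



section mcdfAux
variable (μ : Measure ℝ) [IsProbabilityMeasure μ] [NullSingletonClass μ]

lemma mcdf_Iio (a : ℝ) : (μ (Set.Iio a)).toReal = mcdf μ a := by
  rw [mcdf, measure_congr (Iio_ae_eq_Iic (a := a))]

lemma mcdf_Ioc {a b : ℝ} (h : a ≤ b) : (μ (Set.Ioc a b)).toReal = mcdf μ b - mcdf μ a := by
  have hsum : μ (Set.Iic a) + μ (Set.Ioc a b) = μ (Set.Iic b) := by
    rw [← measure_union (Set.Iic_disjoint_Ioc le_rfl) measurableSet_Ioc,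
      Set.Iic_union_Ioc_eq_Iic h]
  have h1 := measure_ne_top μ (Set.Iic a)
  have h2 := measure_ne_top μ (Set.Ioc a b)
  rw [mcdf, mcdf, ← hsum, ENNReal.toReal_add h1 h2]
  ring

lemma mcdf_Ioo {a b : ℝ} (h : a ≤ b) : (μ (Set.Ioo a b)).toReal = mcdf μ b - mcdf μ a := by
  rw [measure_congr (Ioo_ae_eq_Ioc (a := a) (b := b)), mcdf_Ioc μ h]

lemma mcdf_Ioi (a : ℝ) : (μ (Set.Ioi a)).toReal = 1 - mcdf μ a := by
  have hsum : μ (Set.Iic a) + μ (Set.Ioi a) = 1 := by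
    rw [← measure_union (Set.Iic_disjoint_Ioi le_rfl) measurableSet_Ioi, Set.Iic_union_Ioi]
    exact measure_univ
  have h1 := measure_ne_top μ (Set.Iic a)
  have h2 := measure_ne_top μ (Set.Ioi a)
  have := congrArg ENNReal.toReal hsum
  rw [ENNReal.toReal_add h1 h2, ENNReal.toReal_one] at this
  rw [mcdf]
  linarith
end mcdfAux


/-- The support points of an optimal `k`-point measure satisfy the system of `k`
median equations on their Voronoi cells. -/
theorem stmt10 (μ : Measure ℝ) (hμ : BasicAssumptions μ)
    (hint : Integrable (fun x : ℝ => |x|) μ) {k : ℕ} (hk : 2 ≤ k)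
    (νstar : Measure ℝ) (hνPk : νstar ∈ Pk k) (hopt : W1 μ νstar = projDist k μ)
    (y : Fin k → ℝ) (hy : StrictMono y) (hsupp : msupport νstar = Set.range y) :
    2 * mcdf μ (y ⟨0, by omega⟩) =
      mcdf μ ((y ⟨0, by omega⟩ + y ⟨1, by omega⟩) / 2) ∧
    (∀ j : ℕ, ∀ _hj1 : 1 ≤ j, ∀ _hj2 : j ≤ k - 2,
      2 * (mcdf μ (y ⟨j, by omega⟩) -
          mcdf μ ((y ⟨j - 1, by omega⟩ + y ⟨j, by omega⟩) / 2)) =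
        mcdf μ ((y ⟨j, by omega⟩ + y ⟨j + 1, by omega⟩) / 2) -
          mcdf μ ((y ⟨j - 1, by omega⟩ + y ⟨j, by omega⟩) / 2)) ∧
    2 * (mcdf μ (y ⟨k - 1, by omega⟩) -
        mcdf μ ((y ⟨k - 2, by omega⟩ + y ⟨k - 1, by omega⟩) / 2)) =
      1 - mcdf μ ((y ⟨k - 2, by omega⟩ + y ⟨k - 1, by omega⟩) / 2) := by
  classical
  obtain ⟨hprob, ρ, S, hμρ, -⟩ := hμ
  haveI := hprob
  haveI : NeZero k := ⟨by omega⟩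
  haveI : NullSingletonClass μ := by
    constructor
    intro a
    rw [hμρ, withDensity_apply _ (measurableSet_singleton a),
      Measure.restrict_eq_zero.mpr (by simp)]
    exact lintegral_zero_measure _
  obtain ⟨hνprob, s, hcard, hs0⟩ := hνPk
  haveI := hνprob
  have hnull : νstar ((Set.range y)ᶜ) = 0 := by
    have hpt : ∀ p ∈ (↑s : Set ℝ) \ Set.range y, νstar {p} = 0 := by
      intro p hp
      have hns : p ∉ msupport νstar := by rw [hsupp]; exact hp.2
      rw [msupport, Set.mem_setOf_eq] at hns
      push_neg at hns
      obtain ⟨U, hU, hU0⟩ := hns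
      exact measure_mono_null (Set.singleton_subset_iff.mpr (mem_of_mem_nhds hU)) hU0
    have hdiff0 : νstar ((↑s : Set ℝ) \ Set.range y) = 0 := by
      have hcnt : ((↑s : Set ℝ) \ Set.range y).Countable :=
        (s.finite_toSet.subset Set.diff_subset).countable
      have hrw : (↑s : Set ℝ) \ Set.range y = ⋃ p ∈ (↑s : Set ℝ) \ Set.range y, {p} :=
        (Set.biUnion_of_singleton _).symm
      rw [hrw]
      exact (measure_biUnion_null_iff hcnt).mpr hpt
    have hsub : (Set.range y)ᶜ ⊆ ((↑s : Set ℝ)ᶜ) ∪ ((↑s : Set ℝ) \ Set.range y) := by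
      intro x hx
      by_cases hxs : x ∈ (↑s : Set ℝ)
      · exact Or.inr ⟨hxs, hx⟩
      · exact Or.inl hxs
    exact measure_mono_null hsub (measure_union_null hs0 hdiff0)
  have hνae : ∀ᵐ x ∂νstar, x ∈ Set.range y := by
    rw [ae_iff]
    exact hnull
  have hνint : Integrable (fun x : ℝ => |x|) νstar := by
    refine Integrable.mono'
      (g := fun _ => (Finset.univ.image y).sup' ⟨y ⟨0, by omega⟩, by simp⟩ (fun a => |a|))
      (integrable_const _) continuous_abs.aestronglyMeasurable ?_
    filter_upwards [hνae] with x hx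
    rw [Real.norm_eq_abs, abs_abs]
    obtain ⟨i, rfl⟩ := hx
    exact Finset.le_sup' (fun a => |a|) (by simp)
  have hmin : ∀ (j : Fin k) (t : ℝ), StrictMono (Function.update y j t) →
      (∫ x, gdist y x ∂μ) ≤ ∫ x, gdist (Function.update y j t) x ∂μ := by
    intro j t ht
    calc ∫ x, gdist y x ∂μ ≤ W1 μ νstar := W1_ge μ νstar hint hνint y hnull
      _ = projDist k μ := hopt
      _ ≤ ∫ x, gdist (Function.update y j t) x ∂μ := projDist_le μ hint _ ht
  have med : ∀ j : Fin k,
      (μ {x : ℝ | cellL y j < (x:EReal) ∧ x < y j}).toReal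
        = (μ {x : ℝ | y j < x ∧ (x:EReal) < cellU y j}).toReal :=
    fun j => cell_median μ hint y hy j (hmin j)
  refine ⟨?_, ?_, ?_⟩
  · -- first equation
    have h := med ⟨0, by omega⟩
    have hL0 : cellL y ⟨0, by omega⟩ = (⊥ : EReal) := by
      rw [cellL]; exact dif_pos rfl
    have hU0 : cellU y ⟨0, by omega⟩
        = (((y ⟨0, by omega⟩ + y ⟨1, by omega⟩) / 2 : ℝ) : EReal) := by
      rw [cellU, dif_neg (by omega : ¬ (0 = k - 1))]
    rw [hL0, hU0] at h
    have hA : {x : ℝ | (⊥ : EReal) < (x:EReal) ∧ x < y ⟨0, by omega⟩}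
        = Set.Iio (y ⟨0, by omega⟩) := by
      ext x
      simp [EReal.bot_lt_coe]
    have hB : {x : ℝ | y ⟨0, by omega⟩ < x ∧
          (x:EReal) < (((y ⟨0, by omega⟩ + y ⟨1, by omega⟩) / 2 : ℝ) : EReal)}
        = Set.Ioo (y ⟨0, by omega⟩) ((y ⟨0, by omega⟩ + y ⟨1, by omega⟩) / 2) := by
      ext x
      simp only [Set.mem_setOf_eq, Set.mem_Ioo, EReal.coe_lt_coe_iff]
    have h01 : y ⟨0, by omega⟩ < y ⟨1, by omega⟩ := hy (by simp [Fin.lt_def])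
    rw [hA, hB, mcdf_Iio, mcdf_Ioo μ (by linarith)] at h
    linarith
  · -- middle equations
    intro j hj1 hj2
    have h := med ⟨j, by omega⟩
    have hLj : cellL y ⟨j, by omega⟩
        = (((y ⟨j - 1, by omega⟩ + y ⟨j, by omega⟩) / 2 : ℝ) : EReal) := by
      rw [cellL, dif_neg (by omega : ¬ (j = 0))]
    have hUj : cellU y ⟨j, by omega⟩
        = (((y ⟨j, by omega⟩ + y ⟨j + 1, by omega⟩) / 2 : ℝ) : EReal) := by
      rw [cellU, dif_neg (by omega : ¬ (j = k - 1))]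
    rw [hLj, hUj] at h
    have hA : {x : ℝ | (((y ⟨j - 1, by omega⟩ + y ⟨j, by omega⟩) / 2 : ℝ) : EReal) < (x:EReal)
          ∧ x < y ⟨j, by omega⟩}
        = Set.Ioo ((y ⟨j - 1, by omega⟩ + y ⟨j, by omega⟩) / 2) (y ⟨j, by omega⟩) := by
      ext x
      simp only [Set.mem_setOf_eq, Set.mem_Ioo, EReal.coe_lt_coe_iff]
    have hB : {x : ℝ | y ⟨j, by omega⟩ < x ∧
          (x:EReal) < (((y ⟨j, by omega⟩ + y ⟨j + 1, by omega⟩) / 2 : ℝ) : EReal)}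
        = Set.Ioo (y ⟨j, by omega⟩) ((y ⟨j, by omega⟩ + y ⟨j + 1, by omega⟩) / 2) := by
      ext x
      simp only [Set.mem_setOf_eq, Set.mem_Ioo, EReal.coe_lt_coe_iff]
    have hp1 : y ⟨j - 1, by omega⟩ < y ⟨j, by omega⟩ := hy (by simp [Fin.lt_def]; omega)
    have hp2 : y ⟨j, by omega⟩ < y ⟨j + 1, by omega⟩ := hy (by simp [Fin.lt_def])
    rw [hA, hB, mcdf_Ioo μ (by linarith), mcdf_Ioo μ (by linarith)] at h
    linarith
  · -- last equation
    have h := med ⟨k - 1, by omega⟩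
    have hLk : cellL y ⟨k - 1, by omega⟩
        = (((y ⟨k - 2, by omega⟩ + y ⟨k - 1, by omega⟩) / 2 : ℝ) : EReal) := by
      rw [cellL, dif_neg (by omega : ¬ (k - 1 = 0))]
      norm_num
      congr 2 <;> exact Fin.ext (by simp; omega)
    have hUk : cellU y ⟨k - 1, by omega⟩ = (⊤ : EReal) := by
      rw [cellU]; exact dif_pos rfl
    rw [hLk, hUk] at h
    have hA : {x : ℝ | (((y ⟨k - 2, by omega⟩ + y ⟨k - 1, by omega⟩) / 2 : ℝ) : EReal) < (x:EReal)
          ∧ x < y ⟨k - 1, by omega⟩}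
        = Set.Ioo ((y ⟨k - 2, by omega⟩ + y ⟨k - 1, by omega⟩) / 2) (y ⟨k - 1, by omega⟩) := by
      ext x
      simp only [Set.mem_setOf_eq, Set.mem_Ioo, EReal.coe_lt_coe_iff]
    have hB : {x : ℝ | y ⟨k - 1, by omega⟩ < x ∧ (x:EReal) < (⊤ : EReal)}
        = Set.Ioi (y ⟨k - 1, by omega⟩) := by
      ext x
      simp [EReal.coe_lt_top]
    have hp1 : y ⟨k - 2, by omega⟩ < y ⟨k - 1, by omega⟩ := hy (by simp [Fin.lt_def]; omega)
    rw [hA, hB, mcdf_Ioo μ (by linarith), mcdf_Ioi] at h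
    linarith
end NEW
end
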